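/- arXiv:1912.04537 — 9 statements merged into one kernel-verified Lean document; each statement's English description precedes it below -/
import Mathlib

section
/- For every real a > 1, every integer m ≥ 1 and every x ≥ 0, R̂_{m,a}(e₁; x) = 1/(2m) + x·(log a)/((a^{1/m} − 1)·m), where e₁(t) = t. -/
open Real MeasureTheory Filter

/-- The modified Szász–Mirakjan–Kantorovich operator of Mishra and Yadav. -/
noncomputable def szaszKant (a : ℝ) (m : ℕ) (f : ℝ → ℝ) (x : ℝ) : ℝ :=
  (m : ℝ) * ∑' k : ℕ,
    Real.exp (-(x * Real.log a / (a ^ ((1 : ℝ) / (m : ℝ)) - 1))) *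
      (x * Real.log a / (a ^ ((1 : ℝ) / (m : ℝ)) - 1)) ^ k / (Nat.factorial k : ℝ) *
      ∫ t in ((k : ℝ) / (m : ℝ))..(((k : ℝ) + 1) / (m : ℝ)), f t

/-- The `n`-th central moment of the operator. -/
noncomputable def szaszKantCM (a : ℝ) (m : ℕ) (n : ℕ) (x : ℝ) : ℝ :=
  szaszKant a m (fun t => (t - x) ^ n) x

/-!
With `y = x log a / (a^{1/m} - 1)` the operator averages the integrals of `t` over
`[k/m, (k+1)/m]`, which equal `(2k + 1) / (2m²)`, against the Poisson weights
`e^{-y} y^k / k!`. These weights have total mass `1` and mean `y`, so the sum is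
`(2y + 1) / (2m²)`, and the factor `m` in front gives `1/(2m) + y/m`.
-/

open scoped Nat

lemma hasSum_poisson_weight (y : ℝ) :
    HasSum (fun k : ℕ => exp (-y) * y ^ k / k !) 1 := by
  have h := (NormedSpace.expSeries_div_hasSum_exp y).mul_left (exp (-y))
  rw [← Real.exp_eq_exp_ℝ, ← exp_add, neg_add_cancel, exp_zero] at h
  simpa only [mul_div_assoc] using h

lemma hasSum_nat_mul_poisson_weight (y : ℝ) :
    HasSum (fun k : ℕ => k * (exp (-y) * y ^ k / k !)) y := by
  rw [← hasSum_nat_add_iff' 1, Finset.sum_range_one, Nat.cast_zero, zero_mul, sub_zero]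
  have h := (hasSum_poisson_weight y).mul_left y
  rw [mul_one] at h
  refine h.congr_fun fun k => ?_
  rw [Nat.factorial_succ]
  push_cast
  field_simp
  ring

lemma integral_id_div (c : ℝ) (k : ℕ) :
    ∫ t in (k : ℝ) / c..((k : ℝ) + 1) / c, t = (2 * k + 1) / (2 * c ^ 2) := by
  rw [integral_id]
  ring

lemma hasSum_poisson_weight_mul_integral_id (c y : ℝ) :
    HasSum (fun k : ℕ => exp (-y) * y ^ k / k ! * ∫ t in (k : ℝ) / c..((k : ℝ) + 1) / c, t)
      ((2 * y + 1) / (2 * c ^ 2)) := by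
  have h := ((hasSum_nat_mul_poisson_weight y).mul_left 2).add (hasSum_poisson_weight y)
  refine (h.div_const (2 * c ^ 2)).congr_fun fun k => ?_
  rw [integral_id_div]
  ring

theorem szaszKant_e1_general (a : ℝ) (m : ℕ) (x : ℝ) :
    szaszKant a m (fun t => t) x =
      1 / (2 * (m : ℝ)) + x * Real.log a / ((a ^ ((1 : ℝ) / (m : ℝ)) - 1) * (m : ℝ)) := by
  rw [szaszKant, (hasSum_poisson_weight_mul_integral_id _ _).tsum_eq, ← div_div]
  rcases eq_or_ne (m : ℝ) 0 with hm | hm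
  · simp [hm] -- both sides are junk `_ / 0 = 0`
  · field_simp
    ring

theorem szaszKant_e1 (a : ℝ) (ha : 1 < a) (m : ℕ) (hm : 1 ≤ m)
    (x : ℝ) (hx : 0 ≤ x) :
    szaszKant a m (fun t => t) x =
      1 / (2 * (m : ℝ)) + x * Real.log a / ((a ^ ((1 : ℝ) / (m : ℝ)) - 1) * (m : ℝ)) :=
  szaszKant_e1_general a m x
end

section
/- For every real a > 1, every integer m ≥ 1 and every x ≥ 0, R̂_{m,a}(e₂; x) = 1/(3m²) + 2x·(log a)/((a^{1/m} − 1)·m²) + x²·(log a)²/((a^{1/m} − 1)²·m²), where e₂(t) = t². -/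
open Real MeasureTheory Filter


lemma sum0 (y : ℝ) : ∑' k : ℕ, y ^ k / (Nat.factorial k : ℝ) = Real.exp y := by
  rw [Real.exp_eq_exp_ℝ, NormedSpace.exp_eq_tsum_div]

lemma step1 (y : ℝ) (k : ℕ) :
    ((k + 1 : ℕ) : ℝ) * y ^ (k + 1) / (Nat.factorial (k + 1) : ℝ)
      = y * (y ^ k / (Nat.factorial k : ℝ)) := by
  rw [Nat.factorial_succ, pow_succ]
  push_cast
  have : (Nat.factorial k : ℝ) ≠ 0 := Nat.cast_ne_zero.2 (Nat.factorial_ne_zero k)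
  field_simp

lemma step2 (y : ℝ) (k : ℕ) :
    ((k + 1 : ℕ) : ℝ) ^ 2 * y ^ (k + 1) / (Nat.factorial (k + 1) : ℝ)
      = y * ((k : ℝ) * y ^ k / (Nat.factorial k : ℝ)) + y * (y ^ k / (Nat.factorial k : ℝ)) := by
  rw [Nat.factorial_succ, pow_succ]
  push_cast
  have : (Nat.factorial k : ℝ) ≠ 0 := Nat.cast_ne_zero.2 (Nat.factorial_ne_zero k)
  field_simp
  ring

lemma summable1 (y : ℝ) : Summable (fun k : ℕ => (k : ℝ) * y ^ k / (Nat.factorial k : ℝ)) := by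
  rw [← summable_nat_add_iff 1]
  refine Summable.congr ((Real.summable_pow_div_factorial y).mul_left y) fun k => ?_
  exact (step1 y k).symm

lemma sum1 (y : ℝ) : ∑' k : ℕ, (k : ℝ) * y ^ k / (Nat.factorial k : ℝ) = y * Real.exp y := by
  rw [Summable.tsum_eq_zero_add (summable1 y)]
  simp only [Nat.cast_zero, zero_mul, Nat.factorial_zero, Nat.cast_one, zero_div, zero_add]
  rw [tsum_congr (step1 y), tsum_mul_left, sum0]

lemma summable2 (y : ℝ) : Summable (fun k : ℕ => (k : ℝ) ^ 2 * y ^ k / (Nat.factorial k : ℝ)) := by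
  rw [← summable_nat_add_iff 1]
  refine Summable.congr (((summable1 y).mul_left y).add
    ((Real.summable_pow_div_factorial y).mul_left y)) fun k => ?_
  exact (step2 y k).symm

lemma sum2 (y : ℝ) : ∑' k : ℕ, (k : ℝ) ^ 2 * y ^ k / (Nat.factorial k : ℝ)
    = (y ^ 2 + y) * Real.exp y := by
  rw [Summable.tsum_eq_zero_add (summable2 y)]
  simp only [Nat.cast_zero, Nat.factorial_zero, Nat.cast_one, zero_div, zero_add,
    ne_eq, OfNat.ofNat_ne_zero, not_false_eq_true, zero_pow, zero_mul]
  rw [tsum_congr (step2 y),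
    Summable.tsum_add ((summable1 y).mul_left y) ((Real.summable_pow_div_factorial y).mul_left y),
    tsum_mul_left, tsum_mul_left, sum1, sum0]
  ring

theorem szaszKant_e2 (a : ℝ) (ha : 1 < a) (m : ℕ) (hm : 1 ≤ m)
    (x : ℝ) (hx : 0 ≤ x) :
    szaszKant a m (fun t => t ^ 2) x =
      1 / (3 * (m : ℝ) ^ 2) +
        2 * x * Real.log a / ((a ^ ((1 : ℝ) / (m : ℝ)) - 1) * (m : ℝ) ^ 2) +
        x ^ 2 * Real.log a ^ 2 / ((a ^ ((1 : ℝ) / (m : ℝ)) - 1) ^ 2 * (m : ℝ) ^ 2) := by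
  have hm0 : (m : ℝ) ≠ 0 := Nat.cast_ne_zero.2 (by omega)
  have hmpos : (0 : ℝ) < m := by positivity
  have hD : 0 < a ^ ((1 : ℝ) / (m : ℝ)) - 1 := by
    have : 1 < a ^ ((1 : ℝ) / (m : ℝ)) :=
      Real.one_lt_rpow_iff_of_pos (by linarith) |>.2 (Or.inl ⟨ha, by positivity⟩)
    linarith
  set y : ℝ := x * Real.log a / (a ^ ((1 : ℝ) / (m : ℝ)) - 1) with hy
  have key : ∀ k : ℕ,
      Real.exp (-y) * y ^ k / (Nat.factorial k : ℝ) *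
        ∫ t in ((k : ℝ) / (m : ℝ))..(((k : ℝ) + 1) / (m : ℝ)), t ^ 2
      = Real.exp (-y) / (3 * (m : ℝ) ^ 3) *
          ((3 : ℝ) * ((k : ℝ) ^ 2 * y ^ k / (Nat.factorial k : ℝ)) +
            (3 : ℝ) * ((k : ℝ) * y ^ k / (Nat.factorial k : ℝ)) +
            y ^ k / (Nat.factorial k : ℝ)) := by
    intro k
    rw [integral_pow]
    have hk : (Nat.factorial k : ℝ) ≠ 0 := Nat.cast_ne_zero.2 (Nat.factorial_ne_zero k)
    push_cast
    field_simp
    ring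
  have hs2 : Summable (fun k : ℕ => (3 : ℝ) * ((k : ℝ) ^ 2 * y ^ k / (Nat.factorial k : ℝ))) :=
    (summable2 y).mul_left 3
  have hs1 : Summable (fun k : ℕ => (3 : ℝ) * ((k : ℝ) * y ^ k / (Nat.factorial k : ℝ))) :=
    (summable1 y).mul_left 3
  have hs0 : Summable (fun k : ℕ => y ^ k / (Nat.factorial k : ℝ)) :=
    Real.summable_pow_div_factorial y
  rw [szaszKant, tsum_congr key, tsum_mul_left, Summable.tsum_add (hs2.add hs1) hs0,
    Summable.tsum_add hs2 hs1, tsum_mul_left, tsum_mul_left, sum2, sum1, sum0, Real.exp_neg]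
  have hexp : Real.exp y ≠ 0 := Real.exp_ne_zero y
  have h2 : 2 * x * Real.log a / ((a ^ ((1 : ℝ) / (m : ℝ)) - 1) * (m : ℝ) ^ 2)
      = 2 * y / (m : ℝ) ^ 2 := by
    rw [hy]; field_simp
  have h3 : x ^ 2 * Real.log a ^ 2 / ((a ^ ((1 : ℝ) / (m : ℝ)) - 1) ^ 2 * (m : ℝ) ^ 2)
      = y ^ 2 / (m : ℝ) ^ 2 := by
    rw [hy]; field_simp
  rw [h2, h3]
  clear_value y
  field_simp
  ring
end

section
/- For every real a > 1, every integer m ≥ 1 and every x ≥ 0, R̂_{m,a}(e₃; x) = 1/(4m³) + (7/2)·x·(log a)/((a^{1/m} − 1)·m³) + (9/2)·x²·(log a)²/((a^{1/m} − 1)²·m³) + x³·(log a)³/((a^{1/m} − 1)³·m³), where e₃(t) = t³. -/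
/-! Writing `y = x log a / (a^{1/m} - 1)`, the operator averages `t ↦ t³` over the cells
`[k/m, (k+1)/m]` against Poisson weights `e^{-y} yᵏ/k!`. The cell averages are
`((k+1)⁴ - k⁴)/(4m³)`, and expanding `(k+1)⁴ - k⁴ = 4k⁽³⁾ + 18k⁽²⁾ + 14k⁽¹⁾ + 1` in falling
factorials turns the series into factorial moments of the Poisson law, `∑ k⁽ʲ⁾ yᵏ/k! = yʲ eʸ`. -/

open Real MeasureTheory Filter

open Nat

lemma cast_factorial_add_eq_mul_descFactorial (n k : ℕ) :
    ((n + k)! : ℝ) = n ! * ((n + k).descFactorial k : ℝ) := by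
  rw [add_descFactorial_eq_ascFactorial, ← factorial_mul_ascFactorial]
  push_cast
  rfl

lemma hasSum_descFactorial_mul_pow_div_factorial (j : ℕ) (y : ℝ) :
    HasSum (fun k : ℕ => (k.descFactorial j : ℝ) * y ^ k / k !) (y ^ j * exp y) := by
  have h_small : ∀ k ∉ Set.range (· + j), (k.descFactorial j : ℝ) * y ^ k / k ! = 0 := by
    intro k hk
    have hkj : k < j := by
      by_contra h
      exact hk ⟨k - j, Nat.sub_add_cancel (not_lt.1 h)⟩
    simp [descFactorial_eq_zero_iff_lt.2 hkj]
  have h_shift : (fun k : ℕ => (k.descFactorial j : ℝ) * y ^ k / k !) ∘ (· + j) =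
      fun k => y ^ j * (y ^ k / k !) := by
    funext k
    have hk : (k ! : ℝ) ≠ 0 := by positivity
    have hkj : ((k + j).descFactorial j : ℝ) ≠ 0 := by
      exact_mod_cast (descFactorial_pos.2 (Nat.le_add_left j k)).ne'
    simp only [Function.comp_apply, cast_factorial_add_eq_mul_descFactorial, pow_add]
    field_simp
  rw [← (add_left_injective j).hasSum_iff h_small, h_shift, exp_eq_exp_ℝ]
  exact (NormedSpace.expSeries_div_hasSum_exp y).mul_left _

lemma add_one_pow_four_sub_pow_four (k : ℕ) :
    ((k : ℝ) + 1) ^ 4 - (k : ℝ) ^ 4 =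
      4 * (k.descFactorial 3 : ℝ) + 18 * (k.descFactorial 2 : ℝ) +
        14 * (k.descFactorial 1 : ℝ) + 1 := by
  rcases k with _ | _ | _ | k <;> simp [descFactorial_succ] <;> ring

lemma integral_pow_three_div (k : ℕ) (m : ℝ) :
    ∫ t in (k : ℝ) / m..((k : ℝ) + 1) / m, t ^ 3 =
      (4 * (k.descFactorial 3 : ℝ) + 18 * (k.descFactorial 2 : ℝ) +
        14 * (k.descFactorial 1 : ℝ) + 1) / (4 * m ^ 4) := by
  rw [integral_pow, ← add_one_pow_four_sub_pow_four]
  ring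

lemma hasSum_poisson_mul_integral_pow_three (m y : ℝ) :
    HasSum (fun k : ℕ => exp (-y) * y ^ k / k ! * ∫ t in (k : ℝ) / m..((k : ℝ) + 1) / m, t ^ 3)
      ((4 * y ^ 3 + 18 * y ^ 2 + 14 * y + 1) / (4 * m ^ 4)) := by
  have h_moment (j : ℕ) := hasSum_descFactorial_mul_pow_div_factorial j y
  have hS := ((((h_moment 3).mul_left 4).add ((h_moment 2).mul_left 18)).add
    ((h_moment 1).mul_left 14)).add (h_moment 0)
  have h_term : (fun k : ℕ =>
      exp (-y) * y ^ k / k ! * ∫ t in (k : ℝ) / m..((k : ℝ) + 1) / m, t ^ 3) =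
      fun k : ℕ => exp (-y) / (4 * m ^ 4) *
        (4 * ((k.descFactorial 3 : ℝ) * y ^ k / k !) + 18 * ((k.descFactorial 2 : ℝ) * y ^ k / k !) +
          14 * ((k.descFactorial 1 : ℝ) * y ^ k / k !) + (k.descFactorial 0 : ℝ) * y ^ k / k !) := by
    funext k
    rw [integral_pow_three_div, descFactorial_zero]
    ring
  have h_value : (4 * y ^ 3 + 18 * y ^ 2 + 14 * y + 1) / (4 * m ^ 4) = exp (-y) / (4 * m ^ 4) *
      (4 * (y ^ 3 * exp y) + 18 * (y ^ 2 * exp y) + 14 * (y ^ 1 * exp y) + y ^ 0 * exp y) := by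
    have h_exp : exp (-y) * exp y = 1 := by rw [← exp_add, neg_add_cancel, exp_zero]
    linear_combination -(4 * y ^ 3 + 18 * y ^ 2 + 14 * y + 1) / (4 * m ^ 4) * h_exp
  rw [h_term, h_value]
  exact hS.mul_left _

theorem szaszKant_e3_general (a : ℝ) (m : ℕ) (x : ℝ) :
    szaszKant a m (fun t => t ^ 3) x =
      1 / (4 * (m : ℝ) ^ 3) +
        (7 / 2) * x * Real.log a / ((a ^ ((1 : ℝ) / (m : ℝ)) - 1) * (m : ℝ) ^ 3) +
        (9 / 2) * x ^ 2 * Real.log a ^ 2 / ((a ^ ((1 : ℝ) / (m : ℝ)) - 1) ^ 2 * (m : ℝ) ^ 3) +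
        x ^ 3 * Real.log a ^ 3 / ((a ^ ((1 : ℝ) / (m : ℝ)) - 1) ^ 3 * (m : ℝ) ^ 3) := by
  have h_cancel : ∀ c : ℝ, (m : ℝ) * (c / (4 * (m : ℝ) ^ 4)) = c / (4 * (m : ℝ) ^ 3) := by
    rcases eq_or_ne (m : ℝ) 0 with hm | hm
    · simp [hm]
    · intro c
      field_simp
  rw [szaszKant, (hasSum_poisson_mul_integral_pow_three _ _).tsum_eq, h_cancel]
  generalize a ^ ((1 : ℝ) / (m : ℝ)) - 1 = D
  ring

theorem szaszKant_e3 (a : ℝ) (ha : 1 < a) (m : ℕ) (hm : 1 ≤ m)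
    (x : ℝ) (hx : 0 ≤ x) :
    szaszKant a m (fun t => t ^ 3) x =
      1 / (4 * (m : ℝ) ^ 3) +
        (7 / 2) * x * Real.log a / ((a ^ ((1 : ℝ) / (m : ℝ)) - 1) * (m : ℝ) ^ 3) +
        (9 / 2) * x ^ 2 * Real.log a ^ 2 / ((a ^ ((1 : ℝ) / (m : ℝ)) - 1) ^ 2 * (m : ℝ) ^ 3) +
        x ^ 3 * Real.log a ^ 3 / ((a ^ ((1 : ℝ) / (m : ℝ)) - 1) ^ 3 * (m : ℝ) ^ 3) :=
  szaszKant_e3_general a m x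
end

section
/- For every real a > 1, every integer m ≥ 1 and every x ≥ 0, the first central moment satisfies Λ¹_m(x) ≤ 1/(2m). -/
open Real MeasureTheory Filter

/-!
With `y = x log a / (a^{1/m} - 1)`, the operator averages `m ∫_{k/m}^{(k+1)/m} f` against the
Poisson weights `e^{-y} y^k / k!`. For `f t = t - x` the integral is affine in `k`, and the
Poisson distribution has mean `y`, so `Λ¹_m(x) = y/m + 1/(2m) - x`. Writing `b = a^{1/m}`,
we have `log a = m log b ≤ m (b - 1)`, hence `y ≤ m x`.
-/

open scoped Nat

lemma Real.hasSum_pow_div_factorial (y : ℝ) : HasSum (fun k : ℕ => y ^ k / k !) (exp y) := by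
  rw [Real.exp_eq_exp_ℝ]
  exact NormedSpace.expSeries_div_hasSum_exp y

lemma Real.hasSum_nat_mul_pow_div_factorial (y : ℝ) :
    HasSum (fun k : ℕ => k * y ^ k / k !) (y * exp y) := by
  have hshift : (fun k : ℕ => ((k + 1 : ℕ) : ℝ) * y ^ (k + 1) / (k + 1)!)
      = fun k : ℕ => y * (y ^ k / k !) := by
    funext k
    rw [Nat.factorial_succ]
    push_cast
    field_simp
    ring
  rw [← hasSum_nat_add_iff' 1, hshift]
  simpa using (Real.hasSum_pow_div_factorial y).mul_left y

lemma Real.hasSum_exp_neg_mul_pow_div_factorial_mul_affine (y c d : ℝ) :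
    HasSum (fun k : ℕ => exp (-y) * y ^ k / k ! * (c * k + d)) (c * y + d) := by
  have hsplit : (fun k : ℕ => exp (-y) * y ^ k / k ! * (c * k + d))
      = fun k : ℕ => c * exp (-y) * (k * y ^ k / k !) + d * exp (-y) * (y ^ k / k !) := by
    funext k
    ring
  have hval : c * y + d = c * exp (-y) * (y * exp y) + d * exp (-y) * exp y := by
    rw [exp_neg]
    field_simp
  rw [hsplit, hval]
  exact ((Real.hasSum_nat_mul_pow_div_factorial y).mul_left _).add
    ((Real.hasSum_pow_div_factorial y).mul_left _)

lemma intervalIntegral.integral_sub_const (u v x : ℝ) :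
    ∫ t in u..v, (t - x) = (v - u) * ((u + v) / 2 - x) := by
  rw [intervalIntegral.integral_comp_sub_right (fun t => t) x, integral_id]
  ring

noncomputable def szaszKantParam (a : ℝ) (m : ℕ) (x : ℝ) : ℝ :=
  x * log a / (a ^ ((1 : ℝ) / m) - 1)

theorem szaszKantCM_one_eq (a : ℝ) {m : ℕ} (hm : m ≠ 0) (x : ℝ) :
    szaszKantCM a m 1 x = szaszKantParam a m x / m + 1 / (2 * m) - x := by
  have hm' : (m : ℝ) ≠ 0 := by exact_mod_cast hm
  have hint (k : ℕ) : ∫ t in ((k : ℝ) / m)..(((k : ℝ) + 1) / m), (t - x) ^ 1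
      = 1 / m ^ 2 * k + (1 / (2 * m ^ 2) - x / m) := by
    rw [funext fun t => pow_one (t - x), intervalIntegral.integral_sub_const]
    field_simp
    ring
  have hsum := Real.hasSum_exp_neg_mul_pow_div_factorial_mul_affine
    (szaszKantParam a m x) (1 / m ^ 2) (1 / (2 * m ^ 2) - x / m)
  rw [szaszKantCM, szaszKant, ← szaszKantParam]
  simp_rw [hint]
  rw [hsum.tsum_eq]
  field_simp
  ring

lemma szaszKantParam_le {a : ℝ} (ha : 1 < a) {m : ℕ} (hm : m ≠ 0) {x : ℝ} (hx : 0 ≤ x) :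
    szaszKantParam a m x ≤ m * x := by
  have hm' : (0 : ℝ) < m := by positivity
  set b := a ^ ((1 : ℝ) / m)
  have hb : 1 < b := one_lt_rpow ha (by positivity)
  have hlog : log a = m * log b := by
    rw [Real.log_rpow (by linarith)]
    field_simp
  have hlog_le : log b ≤ b - 1 := log_le_sub_one_of_pos (by linarith)
  rw [szaszKantParam, div_le_iff₀ (by linarith), hlog]
  nlinarith [mul_le_mul_of_nonneg_left hlog_le (mul_nonneg hm'.le hx)]

theorem szaszKantCM_one_le (a : ℝ) (ha : 1 < a) (m : ℕ) (hm : 1 ≤ m)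
    (x : ℝ) (hx : 0 ≤ x) :
    szaszKantCM a m 1 x ≤ 1 / (2 * (m : ℝ)) := by
  have hm0 : m ≠ 0 := by omega
  have hparam : szaszKantParam a m x / m ≤ x := by
    rw [div_le_iff₀ (by positivity)]
    linarith [szaszKantParam_le ha hm0 hx]
  rw [szaszKantCM_one_eq a hm0 x]
  linarith
end

section
/- For every real a > 1 and every x ≥ 0, the limit lim_{m→∞} m²·Λ³_m(x) = −(1/2)·x·(3x·log a − 5) holds, where Λ³_m(x) is the third central moment of the modified Szász–Mirakjan–Kantorovich operator. -/
open Real MeasureTheory Filter Topology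

namespace SzaszAux

lemma tsum0 (y : ℝ) : ∑' k : ℕ, y ^ k / (Nat.factorial k : ℝ) = Real.exp y := by
  rw [Real.exp_eq_exp_ℝ, NormedSpace.exp_eq_tsum_div]

lemma sh1 (y : ℝ) (k : ℕ) :
    ((k:ℝ)+1) * y ^ (k+1) / (Nat.factorial (k+1) : ℝ) = y * (y ^ k / (Nat.factorial k : ℝ)) := by
  have h2 : ((Nat.factorial (k+1) : ℕ) : ℝ) = ((k:ℝ)+1) * (Nat.factorial k : ℝ) := by
    rw [Nat.factorial_succ]; push_cast; ring
  rw [h2, pow_succ]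
  have h1 : ((k:ℝ)+1) ≠ 0 := by positivity
  field_simp

lemma sum1 (y : ℝ) : Summable (fun k : ℕ => (k:ℝ) * y ^ k / (Nat.factorial k : ℝ)) := by
  rw [← summable_nat_add_iff 1]
  push_cast
  exact Summable.congr ((Real.summable_pow_div_factorial y).mul_left y)
    (fun k => (sh1 y k).symm)

lemma tsum1 (y : ℝ) : ∑' k : ℕ, (k:ℝ) * y ^ k / (Nat.factorial k : ℝ) = y * Real.exp y := by
  rw [Summable.tsum_eq_zero_add (sum1 y)]
  have h : ∀ k : ℕ, ((k+1 : ℕ):ℝ) * y ^ (k+1) / (Nat.factorial (k+1) : ℝ)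
      = y * (y ^ k / (Nat.factorial k : ℝ)) := by
    intro k; push_cast; exact sh1 y k
  simp only [h]
  rw [tsum_mul_left, tsum0]
  simp

lemma sh2 (y : ℝ) (k : ℕ) :
    (((k:ℝ)+1)) * (((k:ℝ)+1)-1) * y ^ (k+1) / (Nat.factorial (k+1) : ℝ)
      = y * ((k:ℝ) * y ^ k / (Nat.factorial k : ℝ)) := by
  have h2 : ((Nat.factorial (k+1) : ℕ) : ℝ) = ((k:ℝ)+1) * (Nat.factorial k : ℝ) := by
    rw [Nat.factorial_succ]; push_cast; ring
  rw [h2, pow_succ]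
  have h1 : ((k:ℝ)+1) ≠ 0 := by positivity
  field_simp
  ring

lemma sum2 (y : ℝ) : Summable (fun k : ℕ => (k:ℝ) * ((k:ℝ)-1) * y ^ k / (Nat.factorial k : ℝ)) := by
  rw [← summable_nat_add_iff 1]
  push_cast
  exact Summable.congr ((sum1 y).mul_left y) (fun k => (sh2 y k).symm)

lemma tsum2 (y : ℝ) : ∑' k : ℕ, (k:ℝ) * ((k:ℝ)-1) * y ^ k / (Nat.factorial k : ℝ)
    = y^2 * Real.exp y := by
  rw [Summable.tsum_eq_zero_add (sum2 y)]
  have h : ∀ k : ℕ, ((k+1 : ℕ):ℝ) * (((k+1:ℕ):ℝ)-1) * y ^ (k+1) / (Nat.factorial (k+1) : ℝ)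
      = y * ((k:ℝ) * y ^ k / (Nat.factorial k : ℝ)) := by
    intro k; push_cast; exact sh2 y k
  simp only [h]
  rw [tsum_mul_left, tsum1]
  ring_nf

lemma sh3 (y : ℝ) (k : ℕ) :
    (((k:ℝ)+1)) * (((k:ℝ)+1)-1) * (((k:ℝ)+1)-2) * y ^ (k+1) / (Nat.factorial (k+1) : ℝ)
      = y * ((k:ℝ) * ((k:ℝ)-1) * y ^ k / (Nat.factorial k : ℝ)) := by
  have h2 : ((Nat.factorial (k+1) : ℕ) : ℝ) = ((k:ℝ)+1) * (Nat.factorial k : ℝ) := by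
    rw [Nat.factorial_succ]; push_cast; ring
  rw [h2, pow_succ]
  have h1 : ((k:ℝ)+1) ≠ 0 := by positivity
  field_simp
  ring

lemma sum3 (y : ℝ) : Summable (fun k : ℕ => (k:ℝ) * ((k:ℝ)-1) * ((k:ℝ)-2) * y ^ k / (Nat.factorial k : ℝ)) := by
  rw [← summable_nat_add_iff 1]
  push_cast
  exact Summable.congr ((sum2 y).mul_left y) (fun k => (sh3 y k).symm)

lemma tsum3 (y : ℝ) : ∑' k : ℕ, (k:ℝ) * ((k:ℝ)-1) * ((k:ℝ)-2) * y ^ k / (Nat.factorial k : ℝ)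
    = y^3 * Real.exp y := by
  rw [Summable.tsum_eq_zero_add (sum3 y)]
  have h : ∀ k : ℕ, ((k+1 : ℕ):ℝ) * (((k+1:ℕ):ℝ)-1) * (((k+1:ℕ):ℝ)-2) * y ^ (k+1) / (Nat.factorial (k+1) : ℝ)
      = y * ((k:ℝ) * ((k:ℝ)-1) * y ^ k / (Nat.factorial k : ℝ)) := by
    intro k; push_cast; exact sh3 y k
  simp only [h]
  rw [tsum_mul_left, tsum2]
  ring_nf

lemma sumP (y c3 c2 c1 c0 : ℝ) :
    Summable (fun k : ℕ => (c3 * ((k:ℝ)*((k:ℝ)-1)*((k:ℝ)-2)) + c2 * ((k:ℝ)*((k:ℝ)-1)) + c1 * (k:ℝ) + c0)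
      * (y ^ k / (Nat.factorial k : ℝ))) := by
  have h := (((sum3 y).mul_left c3).add ((sum2 y).mul_left c2)).add
    (((sum1 y).mul_left c1).add ((Real.summable_pow_div_factorial y).mul_left c0))
  refine h.congr fun k => ?_
  ring

lemma tsumP (y c3 c2 c1 c0 : ℝ) :
    ∑' k : ℕ, (c3 * ((k:ℝ)*((k:ℝ)-1)*((k:ℝ)-2)) + c2 * ((k:ℝ)*((k:ℝ)-1)) + c1 * (k:ℝ) + c0)
      * (y ^ k / (Nat.factorial k : ℝ))
    = (c3*y^3 + c2*y^2 + c1*y + c0) * Real.exp y := by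
  have h : (fun k : ℕ => (c3 * ((k:ℝ)*((k:ℝ)-1)*((k:ℝ)-2)) + c2 * ((k:ℝ)*((k:ℝ)-1)) + c1 * (k:ℝ) + c0)
      * (y ^ k / (Nat.factorial k : ℝ)))
      = fun k : ℕ => (c3 * ((k:ℝ)*((k:ℝ)-1)*((k:ℝ)-2) * y ^ k / (Nat.factorial k : ℝ))
          + c2 * ((k:ℝ)*((k:ℝ)-1) * y ^ k / (Nat.factorial k : ℝ)))
        + (c1 * ((k:ℝ) * y ^ k / (Nat.factorial k : ℝ))
          + c0 * (y ^ k / (Nat.factorial k : ℝ))) := by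
    funext k; ring
  rw [h, Summable.tsum_add (((sum3 y).mul_left c3).add ((sum2 y).mul_left c2))
        (((sum1 y).mul_left c1).add ((Real.summable_pow_div_factorial y).mul_left c0)),
      Summable.tsum_add ((sum3 y).mul_left c3) ((sum2 y).mul_left c2),
      Summable.tsum_add ((sum1 y).mul_left c1) ((Real.summable_pow_div_factorial y).mul_left c0),
      tsum_mul_left, tsum_mul_left, tsum_mul_left, tsum_mul_left, tsum0, tsum1, tsum2, tsum3]
  ring

lemma closed_form (a x : ℝ) (m : ℕ) (hm : 1 ≤ m) (y : ℝ)
    (hy : y = x * Real.log a / (a ^ ((1:ℝ)/(m:ℝ)) - 1)) :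
    szaszKantCM a m 3 x =
      (1/(m:ℝ))^3 * y^3
      + (-3*x*(1/(m:ℝ))^2 + 9/2*(1/(m:ℝ))^3) * y^2
      + (3*x^2*(1/(m:ℝ)) - 6*x*(1/(m:ℝ))^2 + 7/2*(1/(m:ℝ))^3) * y
      + (-x^3 + 3/2*(1/(m:ℝ))*x^2 - x*(1/(m:ℝ))^2 + (1/(m:ℝ))^3/4) := by
  have hm0 : ((m:ℝ)) ≠ 0 := Nat.cast_ne_zero.mpr (by omega)
  have step1 : szaszKantCM a m 3 x = (m:ℝ) * ∑' k : ℕ,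
      (Real.exp (-y) * (1/(m:ℝ))) *
        (((1/(m:ℝ))^3 * ((k:ℝ)*((k:ℝ)-1)*((k:ℝ)-2))
          + (-3*x*(1/(m:ℝ))^2 + 9/2*(1/(m:ℝ))^3) * ((k:ℝ)*((k:ℝ)-1))
          + (3*x^2*(1/(m:ℝ)) - 6*x*(1/(m:ℝ))^2 + 7/2*(1/(m:ℝ))^3) * (k:ℝ)
          + (-x^3 + 3/2*(1/(m:ℝ))*x^2 - x*(1/(m:ℝ))^2 + (1/(m:ℝ))^3/4))
        * (y ^ k / (Nat.factorial k : ℝ))) := by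
    unfold szaszKantCM szaszKant
    rw [← hy]
    congr 1
    refine tsum_congr fun k => ?_
    rw [intervalIntegral.integral_comp_sub_right (fun t => t^3) x, integral_pow]
    have hf : ((Nat.factorial k : ℕ) : ℝ) ≠ 0 := Nat.cast_ne_zero.mpr k.factorial_ne_zero
    field_simp
    ring_nf
    field_simp
    ring
  rw [step1, tsum_mul_left, tsumP]
  rw [Real.exp_neg]
  have he : Real.exp y ≠ 0 := Real.exp_ne_zero y
  field_simp

noncomputable def Afun (s : ℝ) : ℝ := s / (Real.exp s - 1)
noncomputable def Bfun (s : ℝ) : ℝ := (Real.exp s - 1 - s) / s^2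

lemma lemA : Tendsto Afun (𝓝[≠] (0:ℝ)) (𝓝 1) := by
  have h := (Real.hasDerivAt_exp 0)
  rw [hasDerivAt_iff_tendsto_slope] at h
  have h2 : Tendsto (fun s : ℝ => (Real.exp s - 1)/s) (𝓝[≠] (0:ℝ)) (𝓝 1) := by
    simpa [slope_fun_def_field, Real.exp_zero] using h
  have h3 := h2.inv₀ one_ne_zero
  exact (by simpa [inv_div] using h3 : Tendsto (fun s : ℝ => s / (Real.exp s - 1)) (𝓝[≠] (0:ℝ)) (𝓝 1))

lemma lemB : Tendsto Bfun (𝓝[≠] (0:ℝ)) (𝓝 (1/2)) := by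
  have hb : ∀ᶠ s : ℝ in 𝓝[≠] (0:ℝ), ‖Bfun s - 1/2‖ ≤ 2/9 * |s| := by
    have h1 : ∀ᶠ s : ℝ in 𝓝 (0:ℝ), |s| ≤ 1 := by
      filter_upwards [Metric.closedBall_mem_nhds (0:ℝ) one_pos] with s hs
      simpa [Real.dist_eq] using hs
    filter_upwards [h1.filter_mono nhdsWithin_le_nhds, self_mem_nhdsWithin] with s hs1 hs0
    have hs0' : (s:ℝ) ≠ 0 := hs0
    have key := Real.exp_bound hs1 (n := 3) (by norm_num)
    have hsum : ∑ i ∈ Finset.range 3, s ^ i / (Nat.factorial i : ℝ) = 1 + s + s^2/2 := by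
      simp [Finset.sum_range_succ]
    rw [hsum] at key
    have key' : |Real.exp s - (1 + s + s^2/2)| ≤ |s|^3 * (2/9) := by
      calc |Real.exp s - (1 + s + s^2/2)| ≤ |s|^3 * ((3:ℕ).succ / ((Nat.factorial 3) * 3)) := key
        _ = |s|^3 * (2/9) := by norm_num [Nat.factorial]
    have hs2 : (0:ℝ) < s^2 := by positivity
    have heq : Bfun s - 1/2 = (Real.exp s - (1 + s + s^2/2)) / s^2 := by
      unfold Bfun; field_simp; ring
    rw [heq, norm_div, Real.norm_eq_abs, Real.norm_eq_abs, abs_of_pos hs2]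
    calc |Real.exp s - (1 + s + s^2/2)| / s^2 ≤ (|s|^3 * (2/9)) / s^2 := by gcongr
      _ = 2/9 * |s| := by
          rw [pow_succ, sq_abs]
          field_simp
  have h0 : Tendsto (fun s:ℝ => 2/9*|s|) (𝓝[≠](0:ℝ)) (𝓝 0) := by
    have h0' : Tendsto (fun s:ℝ => 2/9*|s|) (𝓝 (0:ℝ)) (𝓝 0) := by
      simpa using ((continuous_abs.tendsto (0:ℝ)).const_mul (2/9:ℝ))
    exact h0'.mono_left nhdsWithin_le_nhds
  have h2 := squeeze_zero_norm' hb h0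
  have h3 := h2.add_const (1/2)
  simpa using h3

noncomputable def Gfun (a x : ℝ) (m : ℕ) : ℝ :=
  (x * (-(Real.log a) * Bfun (Real.log a/(m:ℝ)) * Afun (Real.log a/(m:ℝ))))^3 * (1/(m:ℝ))
  + (3/2) * (x * (-(Real.log a) * Bfun (Real.log a/(m:ℝ)) * Afun (Real.log a/(m:ℝ))))
      * (3*(x*Afun (Real.log a/(m:ℝ))) - x)
  + (7/2)*(x*Afun (Real.log a/(m:ℝ))) - x + (1/4)*(1/(m:ℝ))

lemma hs_comp (a : ℝ) (ha : 1 < a) :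
    Tendsto (fun m : ℕ => Real.log a / (m:ℝ)) atTop (𝓝[≠] (0:ℝ)) := by
  rw [tendsto_nhdsWithin_iff]
  constructor
  · exact tendsto_const_div_atTop_nhds_zero_nat _
  · filter_upwards [eventually_ge_atTop 1] with m hm
    have h1 : (0:ℝ) < Real.log a := Real.log_pos ha
    have h2 : (0:ℝ) < (m:ℝ) := by exact_mod_cast Nat.pos_of_ne_zero (by omega)
    exact ne_of_gt (div_pos h1 h2)

lemma hG (a x : ℝ) (ha : 1 < a) :
    Tendsto (Gfun a x) atTop (𝓝 (-(1/2) * x * (3 * x * Real.log a - 5))) := by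
  have hA := lemA.comp (hs_comp a ha)
  have hB := lemB.comp (hs_comp a ha)
  have hinv := tendsto_one_div_atTop_nhds_zero_nat (𝕜 := ℝ)
  have hT : Tendsto (fun m : ℕ => x * (-(Real.log a) * Bfun (Real.log a/(m:ℝ)) * Afun (Real.log a/(m:ℝ))))
      atTop (𝓝 (x * (-(Real.log a) * (1/2) * 1))) :=
    tendsto_const_nhds.mul ((tendsto_const_nhds.mul hB).mul hA)
  have hw : Tendsto (fun m : ℕ => x * Afun (Real.log a/(m:ℝ))) atTop (𝓝 (x * 1)) :=
    tendsto_const_nhds.mul hA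
  have H : Tendsto (fun m : ℕ =>
      (x * (-(Real.log a) * Bfun (Real.log a/(m:ℝ)) * Afun (Real.log a/(m:ℝ))))^3 * (1/(m:ℝ))
      + (3/2) * (x * (-(Real.log a) * Bfun (Real.log a/(m:ℝ)) * Afun (Real.log a/(m:ℝ))))
          * (3*(x*Afun (Real.log a/(m:ℝ))) - x)
      + (7/2)*(x*Afun (Real.log a/(m:ℝ))) - x + (1/4)*(1/(m:ℝ))) atTop
      (𝓝 ((x * (-(Real.log a)*(1/2)*1))^3 * 0
        + (3/2) * (x * (-(Real.log a)*(1/2)*1)) * (3*(x*1) - x)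
        + (7/2)*(x*1) - x + (1/4)*0)) := by
    exact ((((hT.pow 3).mul hinv).add
      ((tendsto_const_nhds.mul hT).mul ((tendsto_const_nhds.mul hw).sub_const x))).add
      (tendsto_const_nhds.mul hw)).sub_const x |>.add (tendsto_const_nhds.mul hinv)
  have hGeq : Gfun a x = fun m : ℕ =>
      (x * (-(Real.log a) * Bfun (Real.log a/(m:ℝ)) * Afun (Real.log a/(m:ℝ))))^3 * (1/(m:ℝ))
      + (3/2) * (x * (-(Real.log a) * Bfun (Real.log a/(m:ℝ)) * Afun (Real.log a/(m:ℝ))))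
          * (3*(x*Afun (Real.log a/(m:ℝ))) - x)
      + (7/2)*(x*Afun (Real.log a/(m:ℝ))) - x + (1/4)*(1/(m:ℝ)) := rfl
  rw [hGeq]
  convert H using 2
  ring

lemma main_eq (a x : ℝ) (ha : 1 < a) (m : ℕ) (hm : 1 ≤ m) :
    (m:ℝ)^2 * szaszKantCM a m 3 x = Gfun a x m := by
  have ha0 : 0 < a := lt_trans one_pos ha
  have hla : Real.log a ≠ 0 := ne_of_gt (Real.log_pos ha)
  have hmpos : (0:ℝ) < (m:ℝ) := by exact_mod_cast Nat.pos_of_ne_zero (by omega)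
  have hm0 : ((m:ℝ)) ≠ 0 := ne_of_gt hmpos
  have hs : 0 < Real.log a / (m:ℝ) := div_pos (Real.log_pos ha) hmpos
  have hrpow : a ^ ((1:ℝ)/(m:ℝ)) = Real.exp (Real.log a / (m:ℝ)) := by
    rw [Real.rpow_def_of_pos ha0, mul_one_div]
  have hE : Real.exp (Real.log a/(m:ℝ)) - 1 ≠ 0 := by
    have h1 : (1:ℝ) < Real.exp (Real.log a/(m:ℝ)) := by
      rw [← Real.exp_zero]; exact Real.exp_lt_exp.mpr hs
    exact ne_of_gt (sub_pos.mpr h1)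
  rw [closed_form a x m hm (x * Real.log a / (Real.exp (Real.log a/(m:ℝ)) - 1)) (by rw [hrpow])]
  unfold Gfun Afun Bfun
  have hsne : Real.log a / (m:ℝ) ≠ 0 := ne_of_gt hs
  field_simp
  ring

end SzaszAux

theorem szaszKantCM_three_lim (a : ℝ) (ha : 1 < a) (x : ℝ) (hx : 0 ≤ x) :
    Tendsto (fun m : ℕ => (m : ℝ) ^ 2 * szaszKantCM a m 3 x) atTop
      (nhds (-(1 / 2) * x * (3 * x * Real.log a - 5))) := by
  have hmain : (SzaszAux.Gfun a x) =ᶠ[atTop] (fun m : ℕ => (m : ℝ) ^ 2 * szaszKantCM a m 3 x) := by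
    filter_upwards [eventually_ge_atTop 1] with m hm
    exact (SzaszAux.main_eq a x ha m hm).symm
  exact Filter.Tendsto.congr' hmain (SzaszAux.hG a x ha)
end

section
/- For every real a > 1 and every x ≥ 0, the limit lim_{m→∞} m³·Λ⁶_m(x) = 15x³ holds, where Λ⁶_m(x) is the sixth central moment of the modified Szász–Mirakjan–Kantorovich operator. -/
open Real MeasureTheory Filter

/-!
Write `y = x log a / (a^(1/m) - 1)` for the Poisson parameter of the operator. The cell integral
`m⁷ ∫_{k/m}^{(k+1)/m} (t - x)⁶ dt` is a polynomial of degree six in `k`; expanded in falling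
factorials `k(k-1)⋯(k-i+1)`, whose Poisson means are `yⁱ`, it shows that `m³ Λ⁶_m(x)` is exactly a
polynomial in `x`, `d = y - m x` and `u = 1/m` whose value at `u = 0` is `15 x³`. Finally
`u → 0` and `d → -x log a / 2`, because `1 / (eˢ - 1) - 1 / s → -1/2` as `s → 0`.
-/

open Nat Topology

theorem hasSum_pow_div_factorial_mul_descFactorial (y : ℝ) (i : ℕ) :
    HasSum (fun k : ℕ => y ^ k / k ! * k.descFactorial i) (y ^ i * exp y) := by
  have hvanish : ∀ k ∉ Set.range (· + i), y ^ k / k ! * k.descFactorial i = 0 := by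
    intro k hk
    have hki : k < i := by
      by_contra! h
      exact hk ⟨k - i, Nat.sub_add_cancel h⟩
    simp [Nat.descFactorial_eq_zero_iff_lt.mpr hki]
  rw [← (add_left_injective i).hasSum_iff hvanish, exp_eq_exp_ℝ]
  refine ((NormedSpace.expSeries_div_hasSum_exp y).mul_left (y ^ i)).congr_fun fun n => ?_
  have hfact := Nat.factorial_mul_descFactorial (Nat.le_add_left i n)
  rw [Nat.add_sub_cancel] at hfact
  have hn : (n ! : ℝ) ≠ 0 := by positivity
  have hni : ((n + i) ! : ℝ) ≠ 0 := by positivity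
  simp only [Function.comp_apply]
  field_simp
  rw [← hfact]
  push_cast
  ring

/-- The coefficients of `((k + 1 - z) ^ 7 - (k - z) ^ 7) / 7` in the basis `k.descFactorial i`. -/
noncomputable def sixthMomentCoeff (z : ℝ) : ℕ → ℝ
  | 0 => 1 / 7 - z + 3 * z ^ 2 - 5 * z ^ 3 + 5 * z ^ 4 - 3 * z ^ 5 + z ^ 6
  | 1 => 18 - 62 * z + 90 * z ^ 2 - 70 * z ^ 3 + 30 * z ^ 4 - 6 * z ^ 5
  | 2 => 129 - 270 * z + 225 * z ^ 2 - 90 * z ^ 3 + 15 * z ^ 4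
  | 3 => 200 - 260 * z + 120 * z ^ 2 - 20 * z ^ 3
  | 4 => 100 - 75 * z + 15 * z ^ 2
  | 5 => 18 - 6 * z
  | 6 => 1
  | _ => 0

theorem integral_sub_pow_six_eq_sum_descFactorial (x : ℝ) {m : ℕ} (hm : m ≠ 0) (k : ℕ) :
    ∫ t in (k : ℝ) / m..((k : ℝ) + 1) / m, (t - x) ^ 6 =
      (∑ i ∈ Finset.range 7, sixthMomentCoeff (m * x) i * k.descFactorial i) / (m : ℝ) ^ 7 := by
  rw [intervalIntegral.integral_comp_sub_right (· ^ 6), integral_pow]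
  simp only [← descPochhammer_eval_eq_descFactorial ℝ, Finset.sum_range_succ,
    Finset.sum_range_zero, descPochhammer_succ_eval, descPochhammer_zero, Polynomial.eval_one,
    sixthMomentCoeff]
  have hm' : (m : ℝ) ≠ 0 := Nat.cast_ne_zero.mpr hm
  norm_num
  field_simp
  ring

noncomputable def sixthMomentPoly (x d u : ℝ) : ℝ :=
  15 * x ^ 3 + u * (70 * x ^ 2 + 150 * x ^ 2 * d + 45 * x ^ 2 * d ^ 2)
    + u ^ 2 * (17 * x + 196 * x * d + 330 * x * d ^ 2 + 140 * x * d ^ 3 + 15 * x * d ^ 4)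
    + u ^ 3 * (1 / 7 + 18 * d + 129 * d ^ 2 + 200 * d ^ 3 + 100 * d ^ 4 + 18 * d ^ 5 + d ^ 6)

theorem pow_three_mul_poissonKantorovich_sixth_moment (y x : ℝ) {m : ℕ} (hm : m ≠ 0) :
    (m : ℝ) ^ 3 * ((m : ℝ) * ∑' k : ℕ, exp (-y) * y ^ k / k ! *
      ∫ t in (k : ℝ) / m..((k : ℝ) + 1) / m, (t - x) ^ 6) =
      sixthMomentPoly x (y - m * x) (1 / m) := by
  have hsum : HasSum (fun k : ℕ => exp (-y) * y ^ k / k ! *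
      ∫ t in (k : ℝ) / m..((k : ℝ) + 1) / m, (t - x) ^ 6)
      (exp (-y) / (m : ℝ) ^ 7 *
        ∑ i ∈ Finset.range 7, sixthMomentCoeff (m * x) i * (y ^ i * exp y)) := by
    refine ((hasSum_sum fun i _ => (hasSum_pow_div_factorial_mul_descFactorial y i).mul_left
      (sixthMomentCoeff (m * x) i)).mul_left (exp (-y) / (m : ℝ) ^ 7)).congr_fun fun k => ?_
    rw [integral_sub_pow_six_eq_sum_descFactorial x hm, Finset.mul_sum, Finset.sum_div,
      Finset.mul_sum]
    refine Finset.sum_congr rfl fun i _ => ?_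
    ring
  have hm' : (m : ℝ) ≠ 0 := Nat.cast_ne_zero.mpr hm
  rw [hsum.tsum_eq, sixthMomentPoly]
  simp only [Finset.sum_range_succ, Finset.sum_range_zero, sixthMomentCoeff, exp_neg]
  field_simp
  ring

theorem tendsto_exp_sub_sum_range_div_pow (n : ℕ) :
    Tendsto (fun s => (exp s - ∑ i ∈ Finset.range n, s ^ i / i !) / s ^ n) (𝓝[≠] 0)
      (𝓝 (1 / n !)) := by
  have hrem := ((exp_sub_sum_range_succ_isLittleO_pow n).tendsto_div_nhds_zero.mono_left
    (nhdsWithin_le_nhds (s := {0}ᶜ))).add_const (1 / n ! : ℝ)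
  rw [zero_add] at hrem
  refine hrem.congr' ?_
  filter_upwards [self_mem_nhdsWithin] with s hs
  have hs' : s ^ n ≠ 0 := pow_ne_zero n hs
  rw [Finset.sum_range_succ]
  field_simp
  ring

theorem tendsto_inv_exp_sub_one_sub_inv :
    Tendsto (fun s => (exp s - 1)⁻¹ - s⁻¹) (𝓝[≠] 0) (𝓝 (-1 / 2)) := by
  have h1 := tendsto_exp_sub_sum_range_div_pow 1
  have h2 := tendsto_exp_sub_sum_range_div_pow 2
  simp only [Finset.sum_range_succ, Finset.sum_range_zero] at h1 h2
  norm_num at h1 h2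
  rw [show (-1 / 2 : ℝ) = -(1 / 2 / 1) by norm_num]
  refine (h2.div h1 one_ne_zero).neg.congr' ?_
  filter_upwards [self_mem_nhdsWithin] with s hs
  have hs : s ≠ 0 := hs
  have he : exp s - 1 ≠ 0 := sub_ne_zero.mpr (by simpa using hs)
  simp only [Pi.div_apply]
  field_simp
  ring

theorem tendsto_szaszKant_param_sub {a : ℝ} (ha₀ : 0 < a) (ha₁ : a ≠ 1) (x : ℝ) :
    Tendsto (fun m : ℕ => x * log a / (a ^ ((1 : ℝ) / m) - 1) - m * x) atTop
      (𝓝 (-(x * log a) / 2)) := by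
  have hL : log a ≠ 0 := log_ne_zero_of_pos_of_ne_one ha₀ ha₁
  have hstep : Tendsto (fun m : ℕ => log a / m) atTop (𝓝[≠] 0) :=
    tendsto_nhdsWithin_iff.mpr ⟨tendsto_const_div_atTop_nhds_zero_nat _,
      (eventually_ne_atTop 0).mono fun m hm => div_ne_zero hL (Nat.cast_ne_zero.mpr hm)⟩
  rw [show -(x * log a) / 2 = x * log a * (-1 / 2) by ring]
  refine ((tendsto_inv_exp_sub_one_sub_inv.comp hstep).const_mul (x * log a)).congr' ?_
  filter_upwards [eventually_ne_atTop 0] with m hm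
  have hm' : (m : ℝ) ≠ 0 := Nat.cast_ne_zero.mpr hm
  rw [Function.comp_apply, rpow_def_of_pos ha₀, mul_one_div]
  field_simp

theorem szaszKantCM_six_lim_general (a : ℝ) (ha : 1 < a) (x : ℝ) :
    Tendsto (fun m : ℕ => (m : ℝ) ^ 3 * szaszKantCM a m 6 x) atTop (nhds (15 * x ^ 3)) := by
  have hpoly : Continuous fun p : ℝ × ℝ => sixthMomentPoly x p.1 p.2 := by
    unfold sixthMomentPoly
    fun_prop
  have hparam := tendsto_szaszKant_param_sub (by linarith) ha.ne' x
  have hlim := (hpoly.tendsto _).comp (hparam.prodMk_nhds tendsto_one_div_atTop_nhds_zero_nat)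
  rw [show sixthMomentPoly x (-(x * log a) / 2) 0 = 15 * x ^ 3 by simp [sixthMomentPoly]] at hlim
  refine hlim.congr' ?_
  filter_upwards [eventually_ne_atTop 0] with m hm
  exact (pow_three_mul_poissonKantorovich_sixth_moment _ x hm).symm

theorem szaszKantCM_six_lim (a : ℝ) (ha : 1 < a) (x : ℝ) (hx : 0 ≤ x) :
    Tendsto (fun m : ℕ => (m : ℝ) ^ 3 * szaszKantCM a m 6 x) atTop (nhds (15 * x ^ 3)) :=
  szaszKantCM_six_lim_general a ha x
end

section
/- Let a > 1, let α ∈ (0,1], let g : [0,∞) → ℝ be continuous and bounded, and fix x ≥ 0. If the Lipschitz maximal quantity η_α(g; x) := sup_{t ≥ 0, t ≠ x} |g(t) − g(x)|/|t − x|^α is finite, then for every integer m ≥ 1, |R̂_{m,a}(g; x) − g(x)| ≤ η_α(g; x) · (Λ²_m(x))^{α/2}. -/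
open Real MeasureTheory Filter

namespace SzaszAux

noncomputable def lam (a : ℝ) (m : ℕ) (x : ℝ) : ℝ :=
  x * Real.log a / (a ^ ((1 : ℝ) / (m : ℝ)) - 1)

noncomputable def pk (a : ℝ) (m : ℕ) (x : ℝ) (k : ℕ) : ℝ :=
  Real.exp (-(lam a m x)) * (lam a m x) ^ k / (Nat.factorial k : ℝ)

noncomputable def kmeas (a : ℝ) (m : ℕ) (x : ℝ) : Measure ℝ :=
  Measure.sum fun k : ℕ => ENNReal.ofReal ((m : ℝ) * pk a m x k) •
    volume.restrict (Set.Ioc ((k : ℝ) / (m : ℝ)) (((k : ℝ) + 1) / (m : ℝ)))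

variable {a : ℝ} {m : ℕ} {x : ℝ}

lemma lam_nonneg (ha : 1 < a) (hm : 1 ≤ m) (hx : 0 ≤ x) : 0 ≤ lam a m x := by
  have h1 : (1:ℝ) < a ^ ((1 : ℝ) / (m : ℝ)) := by
    rw [Real.one_lt_rpow_iff_of_pos (by linarith)]
    exact Or.inl ⟨ha, by positivity⟩
  have h2 : 0 ≤ Real.log a := Real.log_nonneg (le_of_lt ha)
  exact div_nonneg (mul_nonneg hx h2) (by linarith)

lemma pk_nonneg (ha : 1 < a) (hm : 1 ≤ m) (hx : 0 ≤ x) (k : ℕ) : 0 ≤ pk a m x k := by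
  have := lam_nonneg ha hm hx
  unfold pk
  positivity

lemma summable_pk : Summable (pk a m x) := by
  have := (Real.summable_pow_div_factorial (lam a m x)).mul_left
    (Real.exp (-(lam a m x)))
  have h : pk a m x = fun k => Real.exp (-(lam a m x)) * ((lam a m x) ^ k / (Nat.factorial k : ℝ)) := by
    funext k; rw [pk, mul_div_assoc]
  rw [h]; exact this

lemma tsum_pk : ∑' k, pk a m x k = 1 := by
  have h : ∑' k : ℕ, (lam a m x) ^ k / (Nat.factorial k : ℝ) = Real.exp (lam a m x) := by
    rw [Real.exp_eq_exp_ℝ, NormedSpace.exp_eq_tsum_div]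
  calc ∑' k, pk a m x k
      = Real.exp (-(lam a m x)) * ∑' k : ℕ, (lam a m x) ^ k / (Nat.factorial k : ℝ) := by
        rw [← tsum_mul_left]
        exact tsum_congr fun k => by rw [pk, mul_div_assoc]
    _ = 1 := by rw [h, ← Real.exp_add]; simp


lemma mpos (hm : 1 ≤ m) : (0:ℝ) < (m:ℝ) := by
  exact_mod_cast Nat.lt_of_lt_of_le Nat.zero_lt_one hm

lemma kmeas_univ (ha : 1 < a) (hm : 1 ≤ m) (hx : 0 ≤ x) :
    kmeas a m x Set.univ = 1 := by
  have hmpos := mpos (m := m) hm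
  rw [kmeas, Measure.sum_apply _ MeasurableSet.univ]
  have : ∀ k : ℕ, (ENNReal.ofReal ((m : ℝ) * pk a m x k) •
      volume.restrict (Set.Ioc ((k : ℝ) / (m : ℝ)) (((k : ℝ) + 1) / (m : ℝ)))) Set.univ
      = ENNReal.ofReal (pk a m x k) := by
    intro k
    rw [Measure.smul_apply, Measure.restrict_apply_univ, Real.volume_Ioc]
    have h1 : ((k : ℝ) + 1) / (m : ℝ) - (k : ℝ) / (m : ℝ) = 1 / (m : ℝ) := by ring
    rw [h1, smul_eq_mul, ← ENNReal.ofReal_mul (mul_nonneg hmpos.le (pk_nonneg ha hm hx k))]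
    congr 1
    field_simp
  simp only [this]
  rw [← ENNReal.ofReal_tsum_of_nonneg (pk_nonneg ha hm hx) summable_pk, tsum_pk]
  simp

lemma kmeas_ae (hm : 1 ≤ m) : ∀ᵐ t ∂(kmeas a m x), 0 ≤ t := by
  have hmpos := mpos (m := m) hm
  rw [ae_iff]
  have hset : {t : ℝ | ¬ 0 ≤ t} = Set.Iio 0 := by ext t; simp
  rw [hset, kmeas, Measure.sum_apply _ measurableSet_Iio]
  have : ∀ k : ℕ, (ENNReal.ofReal ((m : ℝ) * pk a m x k) •
      volume.restrict (Set.Ioc ((k : ℝ) / (m : ℝ)) (((k : ℝ) + 1) / (m : ℝ)))) (Set.Iio 0)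
      = 0 := by
    intro k
    rw [Measure.smul_apply, Measure.restrict_apply measurableSet_Iio]
    have : Set.Iio (0:ℝ) ∩ Set.Ioc ((k : ℝ) / (m : ℝ)) (((k : ℝ) + 1) / (m : ℝ)) = ∅ := by
      ext t
      simp only [Set.mem_inter_iff, Set.mem_Iio, Set.mem_Ioc, Set.mem_empty_iff_false,
        iff_false]
      rintro ⟨ht, h1, -⟩
      have : (0:ℝ) ≤ (k : ℝ) / (m : ℝ) := by positivity
      linarith
    rw [this]
    simp
  simp only [this, tsum_zero]

lemma kmeas_aesm (hm : 1 ≤ m) {f : ℝ → ℝ} (hf : ContinuousOn f (Set.Ici 0)) :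
    AEStronglyMeasurable f (kmeas a m x) := by
  have h1 : (kmeas a m x).restrict (Set.Ici 0) = kmeas a m x :=
    Measure.restrict_eq_self_of_ae_mem (by simpa using kmeas_ae (a := a) (x := x) hm)
  have := hf.aestronglyMeasurable (μ := kmeas a m x) measurableSet_Ici
  rwa [h1] at this

lemma summable_aux {l : ℝ} (hl : 0 ≤ l) :
    Summable (fun k : ℕ => l ^ k * ((k : ℝ) + 2) ^ 2 / (Nat.factorial k : ℝ)) := by
  have key : ∀ k : ℕ, ((k : ℝ) + 2) ^ 2 ≤ 9 * 2 ^ k := by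
    intro k
    induction k with
    | zero => norm_num
    | succ n ih =>
      have h2 : (n : ℝ) + 1 ≤ 2 ^ n := by exact_mod_cast Nat.lt_two_pow_self (n := n)
      have hps : (2:ℝ) ^ (n + 1) = 2 * 2 ^ n := by rw [pow_succ]; ring
      push_cast
      push_cast at ih
      rw [hps]
      nlinarith [ih, h2]
  refine Summable.of_nonneg_of_le (fun k => by positivity) (fun k => ?_)
    (((Real.summable_pow_div_factorial (2 * l)).mul_left 9))
  have hfac : (0:ℝ) < (Nat.factorial k : ℝ) := by exact_mod_cast Nat.factorial_pos k
  have h1 : l ^ k * ((k : ℝ) + 2) ^ 2 ≤ 9 * (2 * l) ^ k := by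
    rw [mul_pow]
    calc l ^ k * ((k : ℝ) + 2) ^ 2 ≤ l ^ k * (9 * 2 ^ k) := by
          exact mul_le_mul_of_nonneg_left (key k) (pow_nonneg hl k)
      _ = 9 * (2 ^ k * l ^ k) := by ring
  calc l ^ k * ((k : ℝ) + 2) ^ 2 / (Nat.factorial k : ℝ)
      ≤ 9 * (2 * l) ^ k / (Nat.factorial k : ℝ) := by
        exact div_le_div_of_nonneg_right h1 hfac.le
    _ = 9 * ((2 * l) ^ k / (Nat.factorial k : ℝ)) := by ring


lemma integrable_kmeas (ha : 1 < a) (hm : 1 ≤ m) (hx : 0 ≤ x) {f : ℝ → ℝ}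
    (hfm : AEStronglyMeasurable f (kmeas a m x)) {C : ℝ}
    (hC : ∀ t : ℝ, 0 ≤ t → |f t| ≤ C * (1 + t) ^ 2) :
    Integrable f (kmeas a m x) := by
  have hmpos := mpos (m := m) hm
  have hC0 : 0 ≤ C := by have := hC 0 le_rfl; nlinarith [abs_nonneg (f 0)]
  refine ⟨hfm, ?_⟩
  unfold HasFiniteIntegral
  rw [kmeas, lintegral_sum_measure]
  have hbd : ∀ k : ℕ, ∫⁻ t, (‖f t‖₊ : ENNReal)
      ∂(ENNReal.ofReal ((m : ℝ) * pk a m x k) •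
        volume.restrict (Set.Ioc ((k : ℝ) / (m : ℝ)) (((k : ℝ) + 1) / (m : ℝ))))
      ≤ ENNReal.ofReal (C * Real.exp (-(lam a m x)) *
          ((lam a m x) ^ k * ((k : ℝ) + 2) ^ 2 / (Nat.factorial k : ℝ))) := by
    intro k
    rw [lintegral_smul_measure]
    have hstep : ∫⁻ t in Set.Ioc ((k : ℝ) / (m : ℝ)) (((k : ℝ) + 1) / (m : ℝ)),
        (‖f t‖₊ : ENNReal) ∂volume
        ≤ ENNReal.ofReal (C * (1 + ((k : ℝ) + 1) / (m : ℝ)) ^ 2) * ENNReal.ofReal (1 / (m : ℝ)) := by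
      have h1 : ∫⁻ t in Set.Ioc ((k : ℝ) / (m : ℝ)) (((k : ℝ) + 1) / (m : ℝ)),
          (‖f t‖₊ : ENNReal) ∂volume
          ≤ ∫⁻ _ in Set.Ioc ((k : ℝ) / (m : ℝ)) (((k : ℝ) + 1) / (m : ℝ)),
            ENNReal.ofReal (C * (1 + ((k : ℝ) + 1) / (m : ℝ)) ^ 2) ∂volume := by
        refine setLIntegral_mono' measurableSet_Ioc (fun t ht => ?_)
        have ht0 : 0 ≤ t := le_of_lt (lt_of_le_of_lt (by positivity) ht.1)
        rw [← enorm_eq_nnnorm, Real.enorm_eq_ofReal_abs]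
        refine ENNReal.ofReal_le_ofReal ?_
        refine (hC t ht0).trans ?_
        have h2 : 1 + t ≤ 1 + ((k : ℝ) + 1) / (m : ℝ) := by linarith [ht.2]
        have h0t : (0:ℝ) ≤ 1 + t := by linarith
        gcongr
      refine h1.trans ?_
      rw [setLIntegral_const, Real.volume_Ioc]
      have h3 : ((k : ℝ) + 1) / (m : ℝ) - (k : ℝ) / (m : ℝ) = 1 / (m : ℝ) := by ring
      rw [h3]
    calc ENNReal.ofReal ((m : ℝ) * pk a m x k) * ∫⁻ t in Set.Ioc ((k : ℝ) / (m : ℝ))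
            (((k : ℝ) + 1) / (m : ℝ)), (‖f t‖₊ : ENNReal) ∂volume
        ≤ ENNReal.ofReal ((m : ℝ) * pk a m x k) *
            (ENNReal.ofReal (C * (1 + ((k : ℝ) + 1) / (m : ℝ)) ^ 2) * ENNReal.ofReal (1 / (m : ℝ))) :=
          mul_le_mul_right hstep _
      _ = ENNReal.ofReal ((m : ℝ) * pk a m x k *
            (C * (1 + ((k : ℝ) + 1) / (m : ℝ)) ^ 2 * (1 / (m : ℝ)))) := by
          rw [← ENNReal.ofReal_mul (by positivity), ← ENNReal.ofReal_mul
            (mul_nonneg hmpos.le (pk_nonneg ha hm hx k))]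
      _ ≤ _ := by
          refine ENNReal.ofReal_le_ofReal ?_
          have he : (m : ℝ) * pk a m x k * (C * (1 + ((k : ℝ) + 1) / (m : ℝ)) ^ 2 * (1 / (m : ℝ)))
              = C * pk a m x k * (1 + ((k : ℝ) + 1) / (m : ℝ)) ^ 2 := by
            field_simp
          rw [he]
          have hb : (1 + ((k : ℝ) + 1) / (m : ℝ)) ^ 2 ≤ ((k : ℝ) + 2) ^ 2 := by
            have : ((k : ℝ) + 1) / (m : ℝ) ≤ (k : ℝ) + 1 :=
              div_le_self (by positivity) (by exact_mod_cast hm)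
            have h4 : 0 ≤ 1 + ((k : ℝ) + 1) / (m : ℝ) := by positivity
            nlinarith
          have hpk : 0 ≤ C * pk a m x k := mul_nonneg hC0 (pk_nonneg ha hm hx k)
          calc C * pk a m x k * (1 + ((k : ℝ) + 1) / (m : ℝ)) ^ 2
              ≤ C * pk a m x k * ((k : ℝ) + 2) ^ 2 := mul_le_mul_of_nonneg_left hb hpk
            _ = C * Real.exp (-(lam a m x)) *
                ((lam a m x) ^ k * ((k : ℝ) + 2) ^ 2 / (Nat.factorial k : ℝ)) := by
                rw [pk]; ring
  calc (∑' k : ℕ, ∫⁻ t, (‖f t‖₊ : ENNReal)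
          ∂(ENNReal.ofReal ((m : ℝ) * pk a m x k) •
            volume.restrict (Set.Ioc ((k : ℝ) / (m : ℝ)) (((k : ℝ) + 1) / (m : ℝ)))))
      ≤ ∑' k : ℕ, ENNReal.ofReal (C * Real.exp (-(lam a m x)) *
          ((lam a m x) ^ k * ((k : ℝ) + 2) ^ 2 / (Nat.factorial k : ℝ))) :=
        ENNReal.tsum_le_tsum hbd
    _ = ENNReal.ofReal (∑' k : ℕ, C * Real.exp (-(lam a m x)) *
          ((lam a m x) ^ k * ((k : ℝ) + 2) ^ 2 / (Nat.factorial k : ℝ))) := by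
        refine (ENNReal.ofReal_tsum_of_nonneg (fun k => ?_) ?_).symm
        · have := lam_nonneg ha hm hx
          positivity
        · exact (summable_aux (lam_nonneg ha hm hx)).mul_left _
    _ < ⊤ := ENNReal.ofReal_lt_top

lemma integral_kmeas (ha : 1 < a) (hm : 1 ≤ m) (hx : 0 ≤ x) {f : ℝ → ℝ}
    (hfi : Integrable f (kmeas a m x)) :
    ∫ t, f t ∂(kmeas a m x) = szaszKant a m f x := by
  have hmpos := mpos (m := m) hm
  rw [kmeas] at hfi
  calc ∫ t, f t ∂(kmeas a m x)
      = ∑' k : ℕ, ∫ t, f t ∂(ENNReal.ofReal ((m : ℝ) * pk a m x k) •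
          volume.restrict (Set.Ioc ((k : ℝ) / (m : ℝ)) (((k : ℝ) + 1) / (m : ℝ)))) := by
        rw [kmeas]; exact integral_sum_measure hfi
    _ = ∑' k : ℕ, (m : ℝ) * (pk a m x k *
          ∫ t in ((k : ℝ) / (m : ℝ))..(((k : ℝ) + 1) / (m : ℝ)), f t) := by
        refine tsum_congr fun k => ?_
        rw [integral_smul_measure, ENNReal.toReal_ofReal
          (mul_nonneg hmpos.le (pk_nonneg ha hm hx k)),
          intervalIntegral.integral_of_le
            ((div_le_div_iff_of_pos_right hmpos).2 (by linarith))]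
        simp only [smul_eq_mul, mul_assoc]
    _ = (m : ℝ) * ∑' k : ℕ, pk a m x k *
          ∫ t in ((k : ℝ) / (m : ℝ))..(((k : ℝ) + 1) / (m : ℝ)), f t := tsum_mul_left
    _ = szaszKant a m f x := by
        rw [szaszKant]
        congr 1

end SzaszAux

open SzaszAux in
theorem szaszKant_lipschitz_maximal (a : ℝ) (ha : 1 < a) (α : ℝ)
    (hα0 : 0 < α) (hα1 : α ≤ 1) (g : ℝ → ℝ)
    (hgc : ContinuousOn g (Set.Ici 0)) (B : ℝ) (hgb : ∀ t : ℝ, 0 ≤ t → |g t| ≤ B)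
    (x : ℝ) (hx : 0 ≤ x)
    (hbdd : BddAbove ((fun t => |g t - g x| / |t - x| ^ α) '' {t : ℝ | 0 ≤ t ∧ t ≠ x}))
    (m : ℕ) (hm : 1 ≤ m) :
    |szaszKant a m g x - g x| ≤
      sSup ((fun t => |g t - g x| / |t - x| ^ α) '' {t : ℝ | 0 ≤ t ∧ t ≠ x}) *
        szaszKantCM a m 2 x ^ (α / 2) := by
  have hmpos := mpos (m := m) hm
  set η := sSup ((fun t => |g t - g x| / |t - x| ^ α) '' {t : ℝ | 0 ≤ t ∧ t ≠ x}) with hη_def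
  set μ := kmeas a m x with hμ
  haveI : IsProbabilityMeasure μ := ⟨kmeas_univ ha hm hx⟩
  have hη0 : 0 ≤ η := by
    have hmem : |g (x + 1) - g x| / |x + 1 - x| ^ α ∈
        ((fun t => |g t - g x| / |t - x| ^ α) '' {t : ℝ | 0 ≤ t ∧ t ≠ x}) :=
      ⟨x + 1, ⟨by linarith, by intro h; linarith⟩, rfl⟩
    have h0 : (0:ℝ) ≤ |g (x + 1) - g x| / |x + 1 - x| ^ α :=
      div_nonneg (abs_nonneg _) (Real.rpow_nonneg (abs_nonneg _) _)
    exact h0.trans (le_csSup hbdd hmem)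
  have hB0 : 0 ≤ B := le_trans (abs_nonneg _) (hgb 0 le_rfl)
  have hgI : Integrable g μ := by
    refine integrable_kmeas ha hm hx (kmeas_aesm hm hgc) (C := B) (fun t ht => ?_)
    have h1 : (1:ℝ) ≤ (1 + t) ^ 2 := by nlinarith
    calc |g t| ≤ B := hgb t ht
      _ ≤ B * (1 + t) ^ 2 := by nlinarith
  have habs : ∀ t : ℝ, 0 ≤ t → |t - x| ≤ (1 + x) * (1 + t) := by
    intro t ht
    have h2 : |t - x| ≤ t + x := abs_le.2 ⟨by linarith, by linarith⟩
    nlinarith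
  have hφcont : Continuous (fun t : ℝ => |t - x| ^ α) :=
    Continuous.rpow_const ((continuous_id.sub continuous_const).abs) (fun t => Or.inr hα0.le)
  have hφI : Integrable (fun t : ℝ => |t - x| ^ α) μ := by
    refine integrable_kmeas ha hm hx hφcont.aestronglyMeasurable (C := 1 + x) (fun t ht => ?_)
    rw [abs_of_nonneg (Real.rpow_nonneg (abs_nonneg _) _)]
    have h2 := habs t ht
    rcases le_or_gt (|t - x|) 1 with h | h
    · calc |t - x| ^ α ≤ 1 := Real.rpow_le_one (abs_nonneg _) h hα0.le
        _ ≤ (1 + x) * (1 + t) ^ 2 := by nlinarith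
    · calc |t - x| ^ α ≤ |t - x| ^ (1:ℝ) := Real.rpow_le_rpow_of_exponent_le h.le hα1
        _ = |t - x| := Real.rpow_one _
        _ ≤ (1 + x) * (1 + t) ^ 2 := by nlinarith
  have hψcont : Continuous (fun t : ℝ => (t - x) ^ 2) :=
    (continuous_id.sub continuous_const).pow 2
  have hψI : Integrable (fun t : ℝ => (t - x) ^ 2) μ := by
    refine integrable_kmeas ha hm hx hψcont.aestronglyMeasurable (C := (1 + x) ^ 2)
      (fun t ht => ?_)
    rw [abs_of_nonneg (sq_nonneg _)]
    have h2 := habs t ht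
    have h3 : |t - x| ^ 2 ≤ ((1 + x) * (1 + t)) ^ 2 := pow_le_pow_left₀ (abs_nonneg _) h2 2
    rw [sq_abs] at h3
    calc (t - x) ^ 2 ≤ ((1 + x) * (1 + t)) ^ 2 := h3
      _ = (1 + x) ^ 2 * (1 + t) ^ 2 := by ring
  have hrepg : ∫ t, g t ∂μ = szaszKant a m g x := integral_kmeas ha hm hx hgI
  have hrepψ : ∫ t, (t - x) ^ 2 ∂μ = szaszKantCM a m 2 x := by
    rw [szaszKantCM]; exact integral_kmeas ha hm hx hψI
  have haeb : (fun t => |g t - g x|) ≤ᵐ[μ] (fun t => η * |t - x| ^ α) := by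
    filter_upwards [kmeas_ae (a := a) (x := x) hm] with t ht
    by_cases hte : t = x
    · subst hte
      simp [Real.zero_rpow (ne_of_gt hα0)]
    · have hmem : |g t - g x| / |t - x| ^ α ∈
          ((fun t => |g t - g x| / |t - x| ^ α) '' {t : ℝ | 0 ≤ t ∧ t ≠ x}) :=
        ⟨t, ⟨ht, hte⟩, rfl⟩
      have hkey := le_csSup hbdd hmem
      have hpos : 0 < |t - x| ^ α :=
        Real.rpow_pos_of_pos (abs_pos.mpr (sub_ne_zero.mpr hte)) α
      calc |g t - g x| = |g t - g x| / |t - x| ^ α * |t - x| ^ α := by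
            field_simp
        _ ≤ η * |t - x| ^ α := mul_le_mul_of_nonneg_right hkey hpos.le
  have hcomp : ∀ t : ℝ, ((t - x) ^ 2) ^ (α / 2) = |t - x| ^ α := by
    intro t
    rw [← sq_abs, ← Real.rpow_natCast |t - x| 2, ← Real.rpow_mul (abs_nonneg _)]
    congr 1
    push_cast
    ring
  have hjensen : ∫ t, |t - x| ^ α ∂μ ≤ (∫ t, (t - x) ^ 2 ∂μ) ^ (α / 2) := by
    have hconc : ConcaveOn ℝ (Set.Ici 0) (fun s : ℝ => s ^ (α / 2)) :=
      Real.concaveOn_rpow (by positivity) (by linarith)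
    have hcont : ContinuousOn (fun s : ℝ => s ^ (α / 2)) (Set.Ici 0) := fun s _ =>
      (Real.continuousAt_rpow_const s (α / 2) (Or.inr (by positivity))).continuousWithinAt
    have hmem : ∀ᵐ t ∂μ, (t - x) ^ 2 ∈ Set.Ici (0:ℝ) := ae_of_all _ fun t => Set.mem_Ici.mpr (sq_nonneg _)
    have hgi2 : Integrable ((fun s : ℝ => s ^ (α / 2)) ∘ (fun t : ℝ => (t - x) ^ 2)) μ := by
      have he : ((fun s : ℝ => s ^ (α / 2)) ∘ (fun t : ℝ => (t - x) ^ 2))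
          = fun t : ℝ => |t - x| ^ α := funext fun t => hcomp t
      rw [he]; exact hφI
    have hj := hconc.le_map_integral hcont isClosed_Ici hmem hψI hgi2
    calc ∫ t, |t - x| ^ α ∂μ = ∫ t, ((t - x) ^ 2) ^ (α / 2) ∂μ :=
          integral_congr_ae (ae_of_all _ fun t => (hcomp t).symm)
      _ ≤ _ := hj
  have hconst : ∫ _t, g x ∂μ = g x := by simp
  have h1 : szaszKant a m g x - g x = ∫ t, (g t - g x) ∂μ := by
    rw [integral_sub hgI (integrable_const _), hconst, hrepg]
  calc |szaszKant a m g x - g x| = |∫ t, (g t - g x) ∂μ| := by rw [h1]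
    _ ≤ ∫ t, |g t - g x| ∂μ := by
        simpa [Real.norm_eq_abs] using
          norm_integral_le_integral_norm (μ := μ) (fun t => g t - g x)
    _ ≤ ∫ t, η * |t - x| ^ α ∂μ :=
        integral_mono_ae ((hgI.sub (integrable_const _)).abs) (hφI.const_mul η) haeb
    _ = η * ∫ t, |t - x| ^ α ∂μ := integral_const_mul η _
    _ ≤ η * (∫ t, (t - x) ^ 2 ∂μ) ^ (α / 2) := mul_le_mul_of_nonneg_left hjensen hη0
    _ = η * szaszKantCM a m 2 x ^ (α / 2) := by rw [hrepψ]
end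

section
/- Let a > 1, let g : [0,∞) → ℝ be continuous and bounded, and fix x > 0. Let ψ(t) = √(t(1+t)) and u(x) = √x + √(1+x). Then for every integer m ≥ 1 and every differentiable function f : [0,∞) → ℝ whose derivative f' satisfies f(t) − f(s) = ∫_s^t f'(l) dl for all 0 ≤ s ≤ t, with ‖g − f‖ := sup_{t ≥ 0} |g(t) − f(t)| < ∞ and ‖ψ f'‖ := sup_{t > 0} ψ(t)|f'(t)| < ∞, one has |R̂_{m,a}(g; x) − g(x)| ≤ 2·‖g − f‖ + 2·(u(x)/ψ(x))·√(Λ²_m(x))·‖ψ f'‖. Consequently |R̂_{m,a}(g; x) − g(x)| ≤ 2·K_ψ(g; u(x)·√(Λ²_m(x))/ψ(x)), where K_ψ(g; ε) is the infimum of ‖g − f‖ + ε·‖ψ f'‖ over all such f. -/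
open Real MeasureTheory Filter

/-- The weight function `ψ(t) = √(t(1+t))`. -/
noncomputable def psiW (t : ℝ) : ℝ := Real.sqrt (t * (1 + t))

/-- The admissible functions in the definition of the `K`-functional. -/
def admissibleF (g f : ℝ → ℝ) : Prop :=
  (∀ t ∈ Set.Ici (0 : ℝ), DifferentiableAt ℝ f t) ∧
  (∀ s t : ℝ, 0 ≤ s → s ≤ t → f t - f s = ∫ l in s..t, deriv f l) ∧
  BddAbove ((fun t => |g t - f t|) '' Set.Ici (0 : ℝ)) ∧
  BddAbove ((fun t => psiW t * |deriv f t|) '' Set.Ioi (0 : ℝ))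

/-- `‖g - f‖`, the sup norm of `g - f` on `[0, ∞)`. -/
noncomputable def normGF (g f : ℝ → ℝ) : ℝ :=
  sSup ((fun t => |g t - f t|) '' Set.Ici (0 : ℝ))

/-- `‖ψ f'‖`, the weighted sup norm of `f'` on `(0, ∞)`. -/
noncomputable def normPsiDeriv (f : ℝ → ℝ) : ℝ :=
  sSup ((fun t => psiW t * |deriv f t|) '' Set.Ioi (0 : ℝ))

/-- The `K`-functional `K_ψ(g; ε)`. -/
noncomputable def Kpsi (g : ℝ → ℝ) (ε : ℝ) : ℝ :=
  sInf {c : ℝ | ∃ f : ℝ → ℝ, admissibleF g f ∧ c = normGF g f + ε * normPsiDeriv f}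

noncomputable def lamv (a x : ℝ) (m : ℕ) : ℝ :=
  x * Real.log a / (a ^ ((1 : ℝ) / (m : ℝ)) - 1)

noncomputable def skP (a x : ℝ) (m : ℕ) (k : ℕ) : ℝ :=
  Real.exp (-(lamv a x m)) * (lamv a x m) ^ k / (Nat.factorial k : ℝ)

noncomputable def skI (m : ℕ) (f : ℝ → ℝ) (k : ℕ) : ℝ :=
  ∫ t in ((k : ℝ) / (m : ℝ))..(((k : ℝ) + 1) / (m : ℝ)), f t

lemma szaszKant_eq (a x : ℝ) (m : ℕ) (f : ℝ → ℝ) :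
    szaszKant a m f x = (m : ℝ) * ∑' k : ℕ, skP a x m k * skI m f k := rfl

lemma lamv_pos (a x : ℝ) (m : ℕ) (ha : 1 < a) (hx : 0 < x) (hm : 1 ≤ m) :
    0 < lamv a x m := by
  have hm0 : (0:ℝ) < (m:ℝ) := by exact_mod_cast hm
  have h1 : (1:ℝ) < a ^ ((1:ℝ)/(m:ℝ)) :=
    (Real.one_lt_rpow_iff_of_pos (lt_trans zero_lt_one ha)).mpr
      (Or.inl ⟨ha, by positivity⟩)
  have h2 : 0 < Real.log a := Real.log_pos ha
  unfold lamv
  exact div_pos (mul_pos hx h2) (by linarith)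

lemma summable_sq_mul (lam c : ℝ) (hlam : 0 ≤ lam) (hc : 0 ≤ c) :
    Summable (fun k : ℕ => lam ^ k / (Nat.factorial k : ℝ) * ((k : ℝ) + c) ^ 2) := by
  apply Summable.of_nonneg_of_le (fun k => by positivity) (fun k => ?_)
    ((Real.summable_pow_div_factorial (4 * lam)).mul_left ((1 + c) ^ 2))
  have hk : (0:ℝ) ≤ (k:ℝ) := Nat.cast_nonneg k
  have h2 : ((k:ℝ) + 1) ≤ 2 ^ k := by exact_mod_cast Nat.lt_two_pow_self (n := k)
  have h4 : ((k:ℝ) + c) ^ 2 ≤ (1 + c) ^ 2 * 4 ^ k := by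
    have h1 : ((k:ℝ) + c) ≤ (1 + c) * ((k:ℝ) + 1) := by nlinarith
    have h3 : ((k:ℝ) + 1) ^ 2 ≤ 4 ^ k := by
      calc ((k:ℝ) + 1) ^ 2 ≤ ((2:ℝ) ^ k) ^ 2 := by nlinarith
        _ = 4 ^ k := by rw [← pow_mul, mul_comm, pow_mul]; norm_num
    calc ((k:ℝ) + c) ^ 2 ≤ ((1 + c) * ((k:ℝ) + 1)) ^ 2 := by
          apply pow_le_pow_left₀ (by positivity) h1
      _ = (1 + c) ^ 2 * ((k:ℝ) + 1) ^ 2 := by ring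
      _ ≤ (1 + c) ^ 2 * 4 ^ k := by nlinarith
  have h5 : (0:ℝ) ≤ lam ^ k / (Nat.factorial k : ℝ) := by positivity
  calc lam ^ k / (Nat.factorial k : ℝ) * ((k : ℝ) + c) ^ 2
      ≤ lam ^ k / (Nat.factorial k : ℝ) * ((1 + c) ^ 2 * 4 ^ k) :=
        mul_le_mul_of_nonneg_left h4 h5
    _ = (1 + c) ^ 2 * ((4 * lam) ^ k / (Nat.factorial k : ℝ)) := by
        rw [mul_pow]; ring

lemma tsum_p_eq_one (lam : ℝ) :
    ∑' k : ℕ, Real.exp (-lam) * lam ^ k / (Nat.factorial k : ℝ) = 1 := by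
  have h1 : ∀ k : ℕ, Real.exp (-lam) * lam ^ k / (Nat.factorial k : ℝ)
      = Real.exp (-lam) * (lam ^ k / (Nat.factorial k : ℝ)) := fun k => mul_div_assoc _ _ _
  rw [tsum_congr h1, tsum_mul_left]
  have h2 : ∑' k : ℕ, lam ^ k / (Nat.factorial k : ℝ) = Real.exp lam := by
    rw [Real.exp_eq_exp_ℝ, NormedSpace.exp_eq_tsum_div]
  rw [h2, ← Real.exp_add]; simp

lemma summable_p (lam : ℝ) :
    Summable (fun k : ℕ => Real.exp (-lam) * lam ^ k / (Nat.factorial k : ℝ)) := by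
  have := (Real.summable_pow_div_factorial lam).mul_left (Real.exp (-lam))
  exact this.congr fun k => (mul_div_assoc _ _ _).symm

lemma core_bound (a x : ℝ) (m : ℕ) (ha : 1 < a) (hx : 0 < x) (hm : 1 ≤ m)
    (g : ℝ → ℝ) (hgc : ContinuousOn g (Set.Ici 0)) (B : ℝ)
    (hgb : ∀ t : ℝ, 0 ≤ t → |g t| ≤ B)
    (c₀ c₂ : ℝ) (hc₀ : 0 ≤ c₀) (hc₂ : 0 ≤ c₂)
    (hpt : ∀ t : ℝ, 0 ≤ t → |g t - g x| ≤ c₀ + c₂ * (t - x) ^ 2) :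
    |szaszKant a m g x - g x| ≤ c₀ + c₂ * szaszKantCM a m 2 x := by
  have hm0 : (0:ℝ) < (m:ℝ) := by exact_mod_cast hm
  have hlam : 0 ≤ lamv a x m := (lamv_pos a x m ha hx hm).le
  set L := lamv a x m with hL
  have hP_eq : ∀ k : ℕ, skP a x m k = Real.exp (-L) * L ^ k / (Nat.factorial k : ℝ) :=
    fun k => rfl
  have hPnn : ∀ k : ℕ, 0 ≤ skP a x m k := fun k => by rw [hP_eq]; positivity
  have hPsum : Summable (fun k : ℕ => skP a x m k) :=
    (summable_p L).congr fun k => (hP_eq k).symm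
  have hPtsum : ∑' k : ℕ, skP a x m k = 1 := by
    rw [tsum_congr hP_eq]; exact tsum_p_eq_one L
  have e0 : ∀ k : ℕ, (0:ℝ) ≤ (k:ℝ)/(m:ℝ) := fun k => by positivity
  have e1 : ∀ k : ℕ, (k:ℝ)/(m:ℝ) ≤ ((k:ℝ)+1)/(m:ℝ) := fun k => by
    exact (div_le_div_iff_of_pos_right hm0).mpr (by linarith)
  have elen : ∀ k : ℕ, ((k:ℝ)+1)/(m:ℝ) - (k:ℝ)/(m:ℝ) = 1/(m:ℝ) := fun k => by
    field_simp; ring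
  have esub : ∀ k : ℕ, Set.uIcc ((k:ℝ)/(m:ℝ)) (((k:ℝ)+1)/(m:ℝ)) ⊆ Set.Ici (0:ℝ) := by
    intro k
    rw [Set.uIcc_of_le (e1 k)]
    exact fun t ht => le_trans (e0 k) ht.1
  have hIg : ∀ k : ℕ, IntervalIntegrable g volume ((k:ℝ)/(m:ℝ)) (((k:ℝ)+1)/(m:ℝ)) :=
    fun k => (hgc.mono (esub k)).intervalIntegrable
  have hq : ∀ k : ℕ, IntervalIntegrable (fun t => (t - x)^2) volume
      ((k:ℝ)/(m:ℝ)) (((k:ℝ)+1)/(m:ℝ)) :=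
    fun k => Continuous.intervalIntegrable (by continuity) _ _
  have hh : ∀ k : ℕ, IntervalIntegrable (fun t => c₀ + c₂ * (t - x)^2) volume
      ((k:ℝ)/(m:ℝ)) (((k:ℝ)+1)/(m:ℝ)) :=
    fun k => Continuous.intervalIntegrable (by continuity) _ _
  have hIqnn : ∀ k : ℕ, 0 ≤ skI m (fun t => (t - x)^2) k := fun k =>
    intervalIntegral.integral_nonneg (e1 k) (fun t _ => by positivity)
  -- upper bound on the square-moment integrals
  have hIqle : ∀ k : ℕ, skI m (fun t => (t - x)^2) k ≤ 1/(m:ℝ) * ((k:ℝ)+1+x)^2 := by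
    intro k
    have hC : ∀ t ∈ Set.uIoc ((k:ℝ)/(m:ℝ)) (((k:ℝ)+1)/(m:ℝ)),
        ‖(t - x)^2‖ ≤ ((k:ℝ)+1+x)^2 := by
      intro t ht
      rw [Set.uIoc_of_le (e1 k)] at ht
      have ht0 : 0 ≤ t := le_trans (e0 k) ht.1.le
      have ht1 : t ≤ (k:ℝ)+1 := le_trans ht.2 (div_le_self (by positivity) (by exact_mod_cast hm))
      have habs : |t - x| ≤ (k:ℝ)+1+x := abs_le.mpr ⟨by linarith, by linarith⟩
      rw [Real.norm_eq_abs, abs_pow]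
      exact pow_le_pow_left₀ (abs_nonneg _) habs 2
    have h1 := intervalIntegral.norm_integral_le_of_norm_le_const hC
    have habs' : |((k:ℝ)+1)/(m:ℝ) - (k:ℝ)/(m:ℝ)| = 1/(m:ℝ) := by
      rw [elen k]; exact abs_of_nonneg (by positivity)
    rw [habs'] at h1
    calc skI m (fun t => (t - x)^2) k ≤ ‖skI m (fun t => (t - x)^2) k‖ := le_abs_self _
      _ ≤ ((k:ℝ)+1+x)^2 * (1/(m:ℝ)) := h1
      _ = 1/(m:ℝ) * ((k:ℝ)+1+x)^2 := mul_comm _ _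
  have hIgle : ∀ k : ℕ, |skI m g k| ≤ B * (1/(m:ℝ)) := by
    intro k
    have hC : ∀ t ∈ Set.uIoc ((k:ℝ)/(m:ℝ)) (((k:ℝ)+1)/(m:ℝ)), ‖g t‖ ≤ B := by
      intro t ht
      rw [Set.uIoc_of_le (e1 k)] at ht
      exact hgb t (le_trans (e0 k) ht.1.le)
    have h1 := intervalIntegral.norm_integral_le_of_norm_le_const hC
    have habs' : |((k:ℝ)+1)/(m:ℝ) - (k:ℝ)/(m:ℝ)| = 1/(m:ℝ) := by
      rw [elen k]; exact abs_of_nonneg (by positivity)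
    rw [habs'] at h1
    exact h1
  -- summability statements
  have hSumQ : Summable (fun k : ℕ => skP a x m k * skI m (fun t => (t - x)^2) k) := by
    apply Summable.of_nonneg_of_le (fun k => mul_nonneg (hPnn k) (hIqnn k)) (fun k => ?_)
      ((summable_sq_mul L (1+x) hlam (by positivity)).mul_left (Real.exp (-L) * (1/(m:ℝ))))
    calc skP a x m k * skI m (fun t => (t - x)^2) k
        ≤ skP a x m k * (1/(m:ℝ) * ((k:ℝ)+1+x)^2) :=
          mul_le_mul_of_nonneg_left (hIqle k) (hPnn k)
      _ = Real.exp (-L) * (1/(m:ℝ)) * (L ^ k / (Nat.factorial k : ℝ) * ((k:ℝ)+(1+x))^2) := by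
          rw [hP_eq]; ring
  have hSumG : Summable (fun k : ℕ => skP a x m k * skI m g k) := by
    apply Summable.of_abs
    apply Summable.of_nonneg_of_le (fun k => abs_nonneg _) (fun k => ?_)
      (hPsum.mul_right (B * (1/(m:ℝ))))
    rw [abs_mul, abs_of_nonneg (hPnn k)]
    exact mul_le_mul_of_nonneg_left (hIgle k) (hPnn k)
  -- the h-integral identity
  have hIh : ∀ k : ℕ, skI m (fun t => c₀ + c₂ * (t - x)^2) k
      = c₀ * (1/(m:ℝ)) + c₂ * skI m (fun t => (t - x)^2) k := by
    intro k
    show (∫ t in ((k:ℝ)/(m:ℝ))..(((k:ℝ)+1)/(m:ℝ)), (c₀ + c₂ * (t - x)^2)) = _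
    rw [intervalIntegral.integral_add intervalIntegrable_const ((hq k).const_mul c₂),
      intervalIntegral.integral_const, intervalIntegral.integral_const_mul,
      smul_eq_mul, elen k]
    show 1/(m:ℝ) * c₀ + c₂ * skI m (fun t => (t - x)^2) k = _
    ring
  -- termwise bound
  have hterm : ∀ k : ℕ, |skP a x m k * (skI m g k - g x * (1/(m:ℝ)))|
      ≤ skP a x m k * (c₀ * (1/(m:ℝ)) + c₂ * skI m (fun t => (t - x)^2) k) := by
    intro k
    rw [abs_mul, abs_of_nonneg (hPnn k)]
    apply mul_le_mul_of_nonneg_left ?_ (hPnn k)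
    have h1 : skI m g k - g x * (1/(m:ℝ))
        = ∫ t in ((k:ℝ)/(m:ℝ))..(((k:ℝ)+1)/(m:ℝ)), (g t - g x) := by
      rw [intervalIntegral.integral_sub (hIg k) intervalIntegrable_const,
        intervalIntegral.integral_const, smul_eq_mul, elen k]
      show _ = skI m g k - 1/(m:ℝ) * g x
      ring
    have key : ∀ᵐ t ∂(volume.restrict (Set.uIoc ((k:ℝ)/(m:ℝ)) (((k:ℝ)+1)/(m:ℝ)))),
        ‖g t - g x‖ ≤ c₀ + c₂ * (t - x)^2 := by
      refine (ae_restrict_iff' measurableSet_uIoc).mpr (Eventually.of_forall fun t ht => ?_)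
      rw [Set.uIoc_of_le (e1 k)] at ht
      exact hpt t (le_trans (e0 k) ht.1.le)
    have h2 := intervalIntegral.norm_integral_le_abs_of_norm_le key (hh k)
    rw [Real.norm_eq_abs] at h2
    have h3 : |∫ t in ((k:ℝ)/(m:ℝ))..(((k:ℝ)+1)/(m:ℝ)), (c₀ + c₂ * (t - x)^2)|
        = c₀ * (1/(m:ℝ)) + c₂ * skI m (fun t => (t - x)^2) k := by
      rw [abs_of_nonneg (intervalIntegral.integral_nonneg (e1 k) (fun t _ => by positivity))]
      exact hIh k
    rw [h1, ← h3]
    exact h2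
  have hSumH : Summable (fun k : ℕ =>
      skP a x m k * (c₀ * (1/(m:ℝ)) + c₂ * skI m (fun t => (t - x)^2) k)) :=
    ((hPsum.mul_right (c₀ * (1/(m:ℝ)))).add (hSumQ.mul_left c₂)).congr (fun k => by ring)
  have hSumD : Summable (fun k : ℕ => skP a x m k * (skI m g k - g x * (1/(m:ℝ)))) :=
    (hSumG.sub (hPsum.mul_right (g x * (1/(m:ℝ))))).congr (fun k => by ring)
  -- the main identity
  have hmain : szaszKant a m g x - g x
      = (m:ℝ) * ∑' k : ℕ, skP a x m k * (skI m g k - g x * (1/(m:ℝ))) := by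
    have h1 : ∑' k : ℕ, skP a x m k * (skI m g k - g x * (1/(m:ℝ)))
        = (∑' k : ℕ, skP a x m k * skI m g k)
          - ∑' k : ℕ, skP a x m k * (g x * (1/(m:ℝ))) := by
      rw [← Summable.tsum_sub hSumG (hPsum.mul_right (g x * (1/(m:ℝ))))]
      exact tsum_congr fun k => by ring
    rw [h1, tsum_mul_right, hPtsum, one_mul, szaszKant_eq, mul_sub]
    congr 1
    field_simp
  -- conclusion
  have habs_tsum : |∑' k : ℕ, skP a x m k * (skI m g k - g x * (1/(m:ℝ)))|
      ≤ ∑' k : ℕ, skP a x m k * (c₀ * (1/(m:ℝ)) + c₂ * skI m (fun t => (t - x)^2) k) := by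
    have hsabs : Summable (fun k : ℕ => |skP a x m k * (skI m g k - g x * (1/(m:ℝ)))|) :=
      Summable.of_nonneg_of_le (fun k => abs_nonneg _) hterm hSumH
    calc |∑' k : ℕ, skP a x m k * (skI m g k - g x * (1/(m:ℝ)))|
        ≤ ∑' k : ℕ, |skP a x m k * (skI m g k - g x * (1/(m:ℝ)))| := by
          have h := norm_tsum_le_tsum_norm (f := fun k : ℕ =>
            skP a x m k * (skI m g k - g x * (1/(m:ℝ))))
            (by simpa only [Real.norm_eq_abs] using hsabs)
          simpa only [Real.norm_eq_abs] using h
      _ ≤ _ := Summable.tsum_le_tsum hterm hsabs hSumH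
  have hfinal : (m:ℝ) * ∑' k : ℕ,
      skP a x m k * (c₀ * (1/(m:ℝ)) + c₂ * skI m (fun t => (t - x)^2) k)
      = c₀ + c₂ * szaszKantCM a m 2 x := by
    have h1 : ∑' k : ℕ, skP a x m k * (c₀ * (1/(m:ℝ)) + c₂ * skI m (fun t => (t - x)^2) k)
        = (∑' k : ℕ, skP a x m k * (c₀ * (1/(m:ℝ))))
          + ∑' k : ℕ, c₂ * (skP a x m k * skI m (fun t => (t - x)^2) k) := by
      rw [← Summable.tsum_add (hPsum.mul_right (c₀ * (1/(m:ℝ)))) (hSumQ.mul_left c₂)]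
      exact tsum_congr fun k => by ring
    rw [h1, tsum_mul_right, hPtsum, one_mul, tsum_mul_left]
    have h2 : szaszKantCM a m 2 x
        = (m:ℝ) * ∑' k : ℕ, skP a x m k * skI m (fun t => (t - x)^2) k := rfl
    rw [h2]
    field_simp
  calc |szaszKant a m g x - g x|
      = (m:ℝ) * |∑' k : ℕ, skP a x m k * (skI m g k - g x * (1/(m:ℝ)))| := by
        rw [hmain, abs_mul, abs_of_nonneg hm0.le]
    _ ≤ (m:ℝ) * ∑' k : ℕ,
          skP a x m k * (c₀ * (1/(m:ℝ)) + c₂ * skI m (fun t => (t - x)^2) k) :=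
        mul_le_mul_of_nonneg_left habs_tsum hm0.le
    _ = c₀ + c₂ * szaszKantCM a m 2 x := hfinal

lemma sqrt_diff_bound (f : ℝ → ℝ) (N : ℝ) (hN : 0 ≤ N)
    (hftc : ∀ s t : ℝ, 0 ≤ s → s ≤ t → f t - f s = ∫ l in s..t, deriv f l)
    (hbd : ∀ l : ℝ, 0 < l → psiW l * |deriv f l| ≤ N)
    (s t : ℝ) (hs : 0 ≤ s) (hst : s ≤ t) :
    |f t - f s| ≤ 2 * N * (Real.sqrt t - Real.sqrt s) := by
  rw [hftc s t hs hst]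
  have hbound : IntervalIntegrable (fun l : ℝ => N * l ^ (-(1:ℝ)/2)) volume s t :=
    (intervalIntegral.intervalIntegrable_rpow' (by norm_num)).const_mul N
  have key : ∀ᵐ l ∂(volume.restrict (Set.uIoc s t)), ‖deriv f l‖ ≤ N * l ^ (-(1:ℝ)/2) := by
    refine (ae_restrict_iff' measurableSet_uIoc).mpr (Eventually.of_forall fun l hl => ?_)
    rw [Set.uIoc_of_le hst] at hl
    have hl0 : 0 < l := lt_of_le_of_lt hs hl.1
    have hpsi : Real.sqrt l ≤ psiW l := Real.sqrt_le_sqrt (by nlinarith)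
    have hsl : 0 < Real.sqrt l := Real.sqrt_pos.mpr hl0
    have h1 : Real.sqrt l * |deriv f l| ≤ N :=
      le_trans (mul_le_mul_of_nonneg_right hpsi (abs_nonneg _)) (hbd l hl0)
    rw [Real.norm_eq_abs, show (-(1:ℝ)/2) = -(1/2 : ℝ) by norm_num,
      Real.rpow_neg hl0.le, ← Real.sqrt_eq_rpow]
    have h2 : |deriv f l| * Real.sqrt l ≤ N := by rwa [mul_comm]
    calc |deriv f l| = |deriv f l| * Real.sqrt l * (Real.sqrt l)⁻¹ := by field_simp
      _ ≤ N * (Real.sqrt l)⁻¹ := mul_le_mul_of_nonneg_right h2 (by positivity)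
  have hint := intervalIntegral.norm_integral_le_abs_of_norm_le key hbound
  have hcalc : (∫ l in s..t, N * l ^ (-(1:ℝ)/2)) = 2 * N * (Real.sqrt t - Real.sqrt s) := by
    rw [intervalIntegral.integral_const_mul, integral_rpow (Or.inl (by norm_num))]
    rw [show (-(1:ℝ)/2 + 1) = (1/2 : ℝ) by norm_num, ← Real.sqrt_eq_rpow,
      ← Real.sqrt_eq_rpow]
    ring
  rw [Real.norm_eq_abs] at hint
  refine hint.trans ?_
  rw [hcalc, abs_of_nonneg ?_]
  have := Real.sqrt_le_sqrt hst
  nlinarith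

lemma ptwise_x (f : ℝ → ℝ) (N : ℝ) (hN : 0 ≤ N)
    (hdb : ∀ s t : ℝ, 0 ≤ s → s ≤ t → |f t - f s| ≤ 2 * N * (Real.sqrt t - Real.sqrt s))
    (x t : ℝ) (hx : 0 < x) (ht : 0 ≤ t) :
    |f t - f x| ≤ 2 * N / Real.sqrt x * |t - x| := by
  have hsx : 0 < Real.sqrt x := Real.sqrt_pos.mpr hx
  rcases le_total x t with h | h
  · have hb := hdb x t hx.le h
    have hmono := Real.sqrt_le_sqrt h
    have h1 : Real.sqrt t - Real.sqrt x ≤ (t - x) / Real.sqrt x := by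
      rw [le_div_iff₀ hsx]
      nlinarith [Real.sq_sqrt hx.le, Real.sq_sqrt (hx.le.trans h),
        Real.sqrt_nonneg t, Real.sqrt_nonneg x]
    rw [show |t - x| = t - x from abs_of_nonneg (by linarith)]
    calc |f t - f x| ≤ 2 * N * (Real.sqrt t - Real.sqrt x) := hb
      _ ≤ 2 * N * ((t - x) / Real.sqrt x) := by
          apply mul_le_mul_of_nonneg_left h1 (by positivity)
      _ = 2 * N / Real.sqrt x * (t - x) := by ring
  · have hb := hdb t x ht h
    have hmono := Real.sqrt_le_sqrt h
    have h1 : Real.sqrt x - Real.sqrt t ≤ (x - t) / Real.sqrt x := by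
      rw [le_div_iff₀ hsx]
      nlinarith [Real.sq_sqrt hx.le, Real.sq_sqrt ht,
        Real.sqrt_nonneg t, Real.sqrt_nonneg x]
    rw [abs_sub_comm (f t) (f x), show |t - x| = -(t - x) from abs_of_nonpos (by linarith)]
    have hg : 2 * N / Real.sqrt x * -(t - x) = 2 * N / Real.sqrt x * (x - t) := by ring
    rw [hg]
    calc |f x - f t| ≤ 2 * N * (Real.sqrt x - Real.sqrt t) := hb
      _ ≤ 2 * N * ((x - t) / Real.sqrt x) := by
          apply mul_le_mul_of_nonneg_left h1 (by positivity)
      _ = 2 * N / Real.sqrt x * (x - t) := by ring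

lemma szaszKantCM_nonneg (a x : ℝ) (m : ℕ) (ha : 1 < a) (hx : 0 < x) (hm : 1 ≤ m) :
    0 ≤ szaszKantCM a m 2 x := by
  have hm0 : (0:ℝ) < (m:ℝ) := by exact_mod_cast hm
  have hlam : 0 ≤ lamv a x m := (lamv_pos a x m ha hx hm).le
  rw [szaszKantCM, szaszKant_eq]
  refine mul_nonneg hm0.le (tsum_nonneg fun k => mul_nonneg ?_ ?_)
  · show 0 ≤ Real.exp (-(lamv a x m)) * (lamv a x m) ^ k / (Nat.factorial k : ℝ)
    positivity
  · exact intervalIntegral.integral_nonneg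
      ((div_le_div_iff_of_pos_right hm0).mpr (by linarith)) (fun t _ => by positivity)

lemma part1 (a : ℝ) (ha : 1 < a) (g : ℝ → ℝ)
    (hgc : ContinuousOn g (Set.Ici 0)) (B : ℝ) (hgb : ∀ t : ℝ, 0 ≤ t → |g t| ≤ B)
    (x : ℝ) (hx : 0 < x) (m : ℕ) (hm : 1 ≤ m)
    (f : ℝ → ℝ) (hf : admissibleF g f) :
    |szaszKant a m g x - g x| ≤
      2 * normGF g f +
        2 * ((Real.sqrt x + Real.sqrt (1 + x)) / psiW x) *
          Real.sqrt (szaszKantCM a m 2 x) * normPsiDeriv f := by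
  obtain ⟨hdiff, hftc, hbdd1, hbdd2⟩ := hf
  have hsx : 0 < Real.sqrt x := Real.sqrt_pos.mpr hx
  have hs1x : 0 < Real.sqrt (1+x) := Real.sqrt_pos.mpr (by linarith)
  have hpsix : 0 < psiW x := Real.sqrt_pos.mpr (by nlinarith)
  have hN1 : ∀ t : ℝ, 0 ≤ t → |g t - f t| ≤ normGF g f :=
    fun t ht => le_csSup hbdd1 ⟨t, ht, rfl⟩
  have hN10 : 0 ≤ normGF g f := (abs_nonneg _).trans (hN1 0 le_rfl)
  have hN2 : ∀ l : ℝ, 0 < l → psiW l * |deriv f l| ≤ normPsiDeriv f :=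
    fun l hl => le_csSup hbdd2 ⟨l, hl, rfl⟩
  have hN20 : 0 ≤ normPsiDeriv f :=
    le_trans (mul_nonneg (Real.sqrt_nonneg _) (abs_nonneg _)) (hN2 1 one_pos)
  have hdb := sqrt_diff_bound f (normPsiDeriv f) hN20 hftc hN2
  have hfx := ptwise_x f (normPsiDeriv f) hN20 hdb x
  have hgpt : ∀ t : ℝ, 0 ≤ t →
      |g t - g x| ≤ 2 * normGF g f + 2 * normPsiDeriv f / Real.sqrt x * |t - x| := by
    intro t ht
    have h1 : g t - g x = (g t - f t) + (f t - f x) + (f x - g x) := by ring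
    have h2 : |f x - g x| ≤ normGF g f := by rw [abs_sub_comm]; exact hN1 x hx.le
    calc |g t - g x| = |(g t - f t) + (f t - f x) + (f x - g x)| := by rw [h1]
      _ ≤ |(g t - f t) + (f t - f x)| + |f x - g x| := abs_add_le _ _
      _ ≤ |g t - f t| + |f t - f x| + |f x - g x| := by
          have := abs_add_le (g t - f t) (f t - f x); linarith
      _ ≤ 2 * normGF g f + 2 * normPsiDeriv f / Real.sqrt x * |t - x| := by
          have := hN1 t ht
          have := hfx t hx ht
          linarith
  set K := 2 * normPsiDeriv f / Real.sqrt x with hKdef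
  have hK0 : 0 ≤ K := by positivity
  have hCMnn : 0 ≤ szaszKantCM a m 2 x := szaszKantCM_nonneg a x m ha hx hm
  set S := Real.sqrt (szaszKantCM a m 2 x) with hSdef
  have hS0 : 0 ≤ S := Real.sqrt_nonneg _
  have hS2 : szaszKantCM a m 2 x = S ^ 2 := (Real.sq_sqrt hCMnn).symm
  have hcore : ∀ δ : ℝ, 0 < δ →
      |szaszKant a m g x - g x| ≤
        (2 * normGF g f + K * (δ/2)) + (K / (2*δ)) * szaszKantCM a m 2 x := by
    intro δ hδ
    refine core_bound a x m ha hx hm g hgc B hgb _ _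
      (add_nonneg (by linarith) (mul_nonneg hK0 (by linarith)))
      (div_nonneg hK0 (by linarith)) ?_
    intro t ht
    have habs' : ∀ u : ℝ, u ^ 2 = (t - x)^2 → u ≤ δ/2 + (t - x)^2 / (2*δ) := by
      intro u hu
      rw [← hu, ← sub_nonneg, show δ/2 + u^2/(2*δ) - u = (u - δ)^2/(2*δ) from by
        field_simp; ring]
      positivity
    have habs : |t - x| ≤ δ/2 + (t - x)^2 / (2*δ) := habs' _ (sq_abs _)
    have h1 := hgpt t ht
    have h2 := mul_le_mul_of_nonneg_left habs hK0
    have h3 : K * (δ/2 + (t - x)^2 / (2*δ)) = K * (δ/2) + K / (2*δ) * (t - x)^2 := by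
      ring
    linarith
  have hclaim : |szaszKant a m g x - g x| ≤ 2 * normGF g f + K * S := by
    apply le_of_forall_pos_le_add
    intro ε hε
    have hK1 : (0:ℝ) < K + 1 := by linarith
    have hδ : 0 < S + ε / (K + 1) := by positivity
    refine (hcore (S + ε / (K + 1)) hδ).trans ?_
    have hSle : S ≤ S + ε / (K + 1) := le_add_of_nonneg_right (by positivity)
    have h1 : K / (2*(S + ε / (K + 1))) * szaszKantCM a m 2 x
        = K * S^2 / (2*(S + ε / (K + 1))) := by rw [hS2]; ring
    have h2 : K * S^2 / (2*(S + ε / (K + 1))) ≤ K * S / 2 := by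
      rw [div_le_iff₀ (by positivity : (0:ℝ) < 2*(S + ε / (K + 1)))]
      have he0 : (0:ℝ) ≤ ε / (K + 1) := by positivity
      nlinarith [mul_nonneg (mul_nonneg hK0 hS0) he0]
    have h3 : K * (ε / (K + 1)) ≤ ε := by
      rw [← mul_div_assoc, div_le_iff₀ hK1]
      nlinarith
    have h4 : K * ((S + ε / (K + 1))/2) = K * S / 2 + K * (ε / (K + 1)) / 2 := by ring
    linarith
  refine hclaim.trans ?_
  have hupsi : 1 / Real.sqrt x ≤ (Real.sqrt x + Real.sqrt (1+x)) / psiW x := by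
    have hps : psiW x = Real.sqrt x * Real.sqrt (1+x) := by
      show Real.sqrt (x * (1+x)) = _
      rw [Real.sqrt_mul hx.le]
    rw [hps, div_le_div_iff₀ hsx (by positivity)]
    nlinarith [Real.sq_sqrt hx.le, hsx.le, hs1x.le]
  calc 2 * normGF g f + K * S
      = 2 * normGF g f + (2 * normPsiDeriv f * S) * (1 / Real.sqrt x) := by
        rw [hKdef]; ring
    _ ≤ 2 * normGF g f + (2 * normPsiDeriv f * S) *
          ((Real.sqrt x + Real.sqrt (1+x)) / psiW x) := by
        have := mul_le_mul_of_nonneg_left hupsi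
          (by positivity : (0:ℝ) ≤ 2 * normPsiDeriv f * S)
        linarith
    _ = 2 * normGF g f + 2 * ((Real.sqrt x + Real.sqrt (1 + x)) / psiW x) * S *
          normPsiDeriv f := by ring

theorem szaszKant_Kfunctional (a : ℝ) (ha : 1 < a) (g : ℝ → ℝ)
    (hgc : ContinuousOn g (Set.Ici 0)) (B : ℝ) (hgb : ∀ t : ℝ, 0 ≤ t → |g t| ≤ B)
    (x : ℝ) (hx : 0 < x) (m : ℕ) (hm : 1 ≤ m) :
    (∀ f : ℝ → ℝ, admissibleF g f →
      |szaszKant a m g x - g x| ≤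
        2 * normGF g f +
          2 * ((Real.sqrt x + Real.sqrt (1 + x)) / psiW x) *
            Real.sqrt (szaszKantCM a m 2 x) * normPsiDeriv f) ∧
    |szaszKant a m g x - g x| ≤
      2 * Kpsi g ((Real.sqrt x + Real.sqrt (1 + x)) * Real.sqrt (szaszKantCM a m 2 x) / psiW x) := by
  have hpart1 : ∀ f : ℝ → ℝ, admissibleF g f →
      |szaszKant a m g x - g x| ≤
        2 * normGF g f +
          2 * ((Real.sqrt x + Real.sqrt (1 + x)) / psiW x) *
            Real.sqrt (szaszKantCM a m 2 x) * normPsiDeriv f :=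
    fun f hf => part1 a ha g hgc B hgb x hx m hm f hf
  refine ⟨hpart1, ?_⟩
  set S := Real.sqrt (szaszKantCM a m 2 x) with hSdef
  set ε₀ := (Real.sqrt x + Real.sqrt (1 + x)) * S / psiW x with hε₀
  have hzero : admissibleF g (fun _ => (0:ℝ)) := by
    refine ⟨fun t _ => differentiableAt_const 0, fun s t hs hst => by simp, ⟨B, ?_⟩, ⟨0, ?_⟩⟩
    · rintro y ⟨t, ht, rfl⟩
      simpa using hgb t ht
    · rintro y ⟨t, ht, rfl⟩
      simp
  have h2 : |szaszKant a m g x - g x| / 2 ≤ Kpsi g ε₀ := by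
    have hmem : (normGF g (fun _ => (0:ℝ)) + ε₀ * normPsiDeriv (fun _ => (0:ℝ))) ∈
        {c : ℝ | ∃ f : ℝ → ℝ, admissibleF g f ∧ c = normGF g f + ε₀ * normPsiDeriv f} :=
      ⟨fun _ => (0:ℝ), hzero, rfl⟩
    apply le_csInf ⟨_, hmem⟩
    rintro c ⟨f, hfa, rfl⟩
    have h := hpart1 f hfa
    have he : 2 * ((Real.sqrt x + Real.sqrt (1 + x)) / psiW x) * S * normPsiDeriv f
        = 2 * (ε₀ * normPsiDeriv f) := by rw [hε₀]; ring
    linarith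
  linarith
end

section
/- Let a > 1, let u, v > 0, let α ∈ (0,1] and let M > 0. Suppose g : [0,∞) → ℝ is continuous and belongs to the Lipschitz-type space Lip_M^{u,v}(α), i.e. |g(y) − g(x)| ≤ M·|y − x|^α/(y + ux² + vx)^{α/2} for all x, y ∈ [0,∞). Then for every integer m ≥ 1 and every x > 0, |R̂_{m,a}(g; x) − g(x)| ≤ M·(Λ²_m(x)/(ux² + vx))^{α/2}. -/
open Real MeasureTheory Filter

/-- The Poisson-type weights. -/
noncomputable def szPw (L : ℝ) (k : ℕ) : ℝ := Real.exp (-L) * L ^ k / (Nat.factorial k : ℝ)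

lemma szPw_nonneg {L : ℝ} (hL : 0 < L) (k : ℕ) : 0 ≤ szPw L k := by
  unfold szPw; positivity

lemma hasSum_szPw (L : ℝ) : HasSum (szPw L) 1 := by
  have h1 : HasSum (fun k : ℕ => L ^ k / (Nat.factorial k : ℝ)) (Real.exp L) := by
    have hs := (Real.summable_pow_div_factorial L).hasSum
    have : ∑' k : ℕ, L ^ k / (Nat.factorial k : ℝ) = Real.exp L := by
      rw [Real.exp_eq_exp_ℝ, NormedSpace.exp_eq_tsum_div]
    rwa [this] at hs
  have h2 := h1.mul_left (Real.exp (-L))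
  have hfe : (fun k : ℕ => Real.exp (-L) * (L ^ k / (Nat.factorial k : ℝ))) = szPw L := by
    funext k; rw [szPw, mul_div_assoc]
  rw [hfe, ← Real.exp_add, neg_add_cancel, Real.exp_zero] at h2
  exact h2

/-- The representing measure of the operator. -/
noncomputable def szMeas (m : ℕ) (L : ℝ) : Measure ℝ :=
  Measure.sum fun k : ℕ =>
    (ENNReal.ofReal ((m : ℝ) * szPw L k)) •
      (volume.restrict (Set.Ioc ((k : ℝ) / (m : ℝ)) (((k : ℝ) + 1) / (m : ℝ))))

lemma szMeas_apply (m : ℕ) (L : ℝ) {s : Set ℝ} (hs : MeasurableSet s) :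
    szMeas m L s = ∑' k : ℕ, ENNReal.ofReal ((m : ℝ) * szPw L k) *
      volume (s ∩ Set.Ioc ((k : ℝ) / (m : ℝ)) (((k : ℝ) + 1) / (m : ℝ))) := by
  rw [szMeas, Measure.sum_apply _ hs]
  simp [Measure.smul_apply, smul_eq_mul, Measure.restrict_apply hs]

lemma szMeas_univ {m : ℕ} (hm : 1 ≤ m) {L : ℝ} (hL : 0 < L) :
    szMeas m L Set.univ = 1 := by
  have hm0 : (0:ℝ) < (m:ℝ) := by exact_mod_cast hm
  rw [szMeas_apply m L MeasurableSet.univ]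
  have hterm : ∀ k : ℕ, ENNReal.ofReal ((m : ℝ) * szPw L k) *
      volume (Set.univ ∩ Set.Ioc ((k : ℝ) / (m : ℝ)) (((k : ℝ) + 1) / (m : ℝ)))
      = ENNReal.ofReal (szPw L k) := by
    intro k
    have hp := szPw_nonneg hL k
    rw [Set.univ_inter, Real.volume_Ioc]
    have he : ((k : ℝ) + 1) / (m : ℝ) - (k : ℝ) / (m : ℝ) = 1 / (m : ℝ) := by
      field_simp
      ring
    rw [he, ← ENNReal.ofReal_mul (mul_nonneg hm0.le hp)]
    congr 1
    field_simp
  rw [tsum_congr hterm, ← ENNReal.ofReal_tsum_of_nonneg (fun k => szPw_nonneg hL k)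
    (hasSum_szPw L).summable, (hasSum_szPw L).tsum_eq, ENNReal.ofReal_one]

lemma szMeas_prob {m : ℕ} (hm : 1 ≤ m) {L : ℝ} (hL : 0 < L) :
    IsProbabilityMeasure (szMeas m L) := ⟨szMeas_univ hm hL⟩

lemma szMeas_ae_mem (m : ℕ) (L : ℝ) : ∀ᵐ t ∂(szMeas m L), t ∈ Set.Ici (0:ℝ) := by
  rw [Filter.eventually_iff, mem_ae_iff]
  have hc : {t : ℝ | t ∈ Set.Ici (0:ℝ)}ᶜ = Set.Iio 0 := by
    ext t; simp [Set.mem_Ici, not_le]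
  rw [hc, szMeas_apply m L measurableSet_Iio]
  have hek : ∀ k : ℕ, Set.Iio (0:ℝ) ∩ Set.Ioc ((k : ℝ) / (m : ℝ)) (((k : ℝ) + 1) / (m : ℝ)) = ∅ := by
    intro k
    ext t
    simp only [Set.mem_inter_iff, Set.mem_Iio, Set.mem_Ioc, Set.mem_empty_iff_false, iff_false,
      not_and, and_imp]
    intro ht h1 _
    exfalso
    have : (0:ℝ) ≤ (k : ℝ) / (m : ℝ) := by positivity
    linarith
  simp [hek]

lemma szMeas_lintegral (m : ℕ) (L : ℝ) (f : ℝ → ENNReal) :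
    ∫⁻ t, f t ∂(szMeas m L) = ∑' k : ℕ, ENNReal.ofReal ((m : ℝ) * szPw L k) *
      ∫⁻ t in Set.Ioc ((k : ℝ) / (m : ℝ)) (((k : ℝ) + 1) / (m : ℝ)), f t := by
  rw [szMeas, lintegral_sum_measure]
  simp [lintegral_smul_measure]

/-- Integrability of quadratically bounded functions w.r.t. the representing measure. -/
lemma szMeas_integrable {m : ℕ} (hm : 1 ≤ m) {L : ℝ} (hL : 0 < L) {f : ℝ → ℝ}
    (hfm : AEStronglyMeasurable f (szMeas m L)) {A B : ℝ} (hA : 0 ≤ A) (hB : 0 ≤ B)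
    (hb : ∀ t : ℝ, 0 < t → |f t| ≤ A + B * t ^ 2) : Integrable f (szMeas m L) := by
  have hm0 : (1:ℝ) ≤ (m:ℝ) := by exact_mod_cast hm
  refine ⟨hfm, ?_⟩
  rw [hasFiniteIntegral_iff_norm]
  have key : ∫⁻ t, ENNReal.ofReal ‖f t‖ ∂(szMeas m L) ≤
      ∑' k : ℕ, ENNReal.ofReal (szPw L k * (A + B * ((k:ℝ) + 1) ^ 2)) := by
    rw [szMeas_lintegral]
    refine ENNReal.tsum_le_tsum fun k => ?_
    have hik : ∫⁻ t in Set.Ioc ((k : ℝ) / (m : ℝ)) (((k : ℝ) + 1) / (m : ℝ)),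
        ENNReal.ofReal ‖f t‖ ≤
        ENNReal.ofReal (A + B * ((k:ℝ) + 1) ^ 2) * ENNReal.ofReal (1 / (m:ℝ)) := by
      have hmono : ∫⁻ t in Set.Ioc ((k : ℝ) / (m : ℝ)) (((k : ℝ) + 1) / (m : ℝ)),
          ENNReal.ofReal ‖f t‖ ≤
          ∫⁻ _ in Set.Ioc ((k : ℝ) / (m : ℝ)) (((k : ℝ) + 1) / (m : ℝ)),
            ENNReal.ofReal (A + B * ((k:ℝ) + 1) ^ 2) := by
        refine setLIntegral_mono measurable_const fun t ht => ?_
        obtain ⟨ht1, ht2⟩ := ht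
        have ht0 : 0 < t := lt_of_le_of_lt (by positivity) ht1
        refine ENNReal.ofReal_le_ofReal ?_
        have h1 : |f t| ≤ A + B * t ^ 2 := hb t ht0
        have h2 : t ≤ (k:ℝ) + 1 := by
          calc t ≤ ((k:ℝ) + 1) / (m:ℝ) := ht2
          _ ≤ (k:ℝ) + 1 := by
            rw [div_le_iff₀ (by linarith)]
            nlinarith [Nat.cast_nonneg (α := ℝ) k]
        have h3 : t ^ 2 ≤ ((k:ℝ) + 1) ^ 2 := by nlinarith
        rw [Real.norm_eq_abs]
        nlinarith
      calc _ ≤ _ := hmono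
      _ = ENNReal.ofReal (A + B * ((k:ℝ) + 1) ^ 2) *
          volume (Set.Ioc ((k : ℝ) / (m : ℝ)) (((k : ℝ) + 1) / (m : ℝ))) := by
        rw [setLIntegral_const]
      _ = _ := by
        rw [Real.volume_Ioc]
        congr 2
        field_simp
        ring
    calc ENNReal.ofReal ((m : ℝ) * szPw L k) *
        ∫⁻ t in Set.Ioc ((k : ℝ) / (m : ℝ)) (((k : ℝ) + 1) / (m : ℝ)), ENNReal.ofReal ‖f t‖
        ≤ ENNReal.ofReal ((m : ℝ) * szPw L k) *
          (ENNReal.ofReal (A + B * ((k:ℝ) + 1) ^ 2) * ENNReal.ofReal (1 / (m:ℝ))) :=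
        mul_le_mul_right hik _
    _ = ENNReal.ofReal (szPw L k * (A + B * ((k:ℝ) + 1) ^ 2)) := by
        have hp := szPw_nonneg hL k
        have hmne : (m:ℝ) ≠ 0 := by linarith
        rw [← ENNReal.ofReal_mul (by positivity : (0:ℝ) ≤ A + B * ((k:ℝ)+1)^2),
          ← ENNReal.ofReal_mul (mul_nonneg (by linarith) hp)]
        congr 1
        field_simp
  refine lt_of_le_of_lt key ?_
  have hsum : Summable (fun k : ℕ => szPw L k * (A + B * ((k:ℝ) + 1) ^ 2)) := by
    have hcomp : ∀ k : ℕ, szPw L k * (A + B * ((k:ℝ) + 1) ^ 2) ≤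
        (Real.exp (-L) * (A + 4 * B)) * ((4 * L) ^ k / (Nat.factorial k : ℝ)) := by
      intro k
      have hk4 : ((k:ℝ) + 1) ^ 2 ≤ 4 * 4 ^ k := by
        have h1 : (k:ℝ) + 1 ≤ 2 ^ (k + 1) := by
          exact_mod_cast (Nat.lt_two_pow_self (n := k+1)).le.trans' (by omega)
        have h2 : ((k:ℝ) + 1) ^ 2 ≤ ((2:ℝ) ^ (k+1)) ^ 2 := by
          have h0 : (0:ℝ) ≤ (k:ℝ) + 1 := by positivity
          nlinarith
        calc ((k:ℝ) + 1) ^ 2 ≤ ((2:ℝ) ^ (k+1)) ^ 2 := h2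
        _ = 4 * 4 ^ k := by
          rw [show (4:ℝ) = 2^2 by norm_num, ← pow_mul, ← pow_mul, ← pow_add]
          have hidx : (k+1)*2 = 2 + 2*k := by omega
          rw [hidx]
      have hLk : L ^ k ≤ (4 * L) ^ k := pow_le_pow_left₀ hL.le (by linarith) k
      have h4Lk : (4:ℝ) ^ k * L ^ k = (4 * L) ^ k := by rw [mul_pow]
      have hfp : (0:ℝ) < (Nat.factorial k : ℝ) := by
        exact_mod_cast Nat.factorial_pos k
      have he : (0:ℝ) < Real.exp (-L) := Real.exp_pos _
      have hnum : Real.exp (-L) * L ^ k * (A + B * ((k:ℝ) + 1) ^ 2) ≤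
          (Real.exp (-L) * (A + 4 * B)) * (4 * L) ^ k := by
        calc Real.exp (-L) * L ^ k * (A + B * ((k:ℝ) + 1) ^ 2)
            ≤ Real.exp (-L) * L ^ k * (A + B * (4 * 4 ^ k)) := by
              have hX : A + B * (((k:ℝ) + 1) ^ 2) ≤ A + B * (4 * 4 ^ k) := by nlinarith
              exact mul_le_mul_of_nonneg_left hX (by positivity)
        _ = Real.exp (-L) * (A * L ^ k + 4 * B * ((4:ℝ) ^ k * L ^ k)) := by ring
        _ ≤ Real.exp (-L) * (A * (4*L) ^ k + 4 * B * (4*L) ^ k) := by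
            rw [h4Lk]
            have hALk : A * L ^ k ≤ A * (4*L) ^ k := mul_le_mul_of_nonneg_left hLk hA
            nlinarith [pow_nonneg (by linarith : (0:ℝ) ≤ 4*L) k]
        _ = (Real.exp (-L) * (A + 4 * B)) * (4*L) ^ k := by ring
      calc szPw L k * (A + B * ((k:ℝ) + 1) ^ 2)
          = Real.exp (-L) * L ^ k * (A + B * ((k:ℝ) + 1) ^ 2) / (Nat.factorial k : ℝ) := by
            rw [szPw]; ring
      _ ≤ (Real.exp (-L) * (A + 4 * B)) * (4 * L) ^ k / (Nat.factorial k : ℝ) := by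
            gcongr
      _ = (Real.exp (-L) * (A + 4 * B)) * ((4 * L) ^ k / (Nat.factorial k : ℝ)) := by ring
    refine Summable.of_nonneg_of_le (fun k => ?_) hcomp
      (((Real.summable_pow_div_factorial (4*L))).mul_left _)
    have := szPw_nonneg hL k
    positivity
  rw [← ENNReal.ofReal_tsum_of_nonneg (fun k => by
    have := szPw_nonneg hL k; positivity) hsum]
  exact ENNReal.ofReal_lt_top

/-- The operator as an integral against the representing measure. -/
lemma szaszKant_eq_integral {a : ℝ} (ha : 1 < a) {m : ℕ} (hm : 1 ≤ m) {x : ℝ}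
    (hx : 0 < x) (hL : 0 < x * Real.log a / (a ^ ((1 : ℝ) / (m : ℝ)) - 1)) (f : ℝ → ℝ)
    (hf : Integrable f (szMeas m (x * Real.log a / (a ^ ((1 : ℝ) / (m : ℝ)) - 1)))) :
    szaszKant a m f x = ∫ t, f t ∂(szMeas m (x * Real.log a / (a ^ ((1 : ℝ) / (m : ℝ)) - 1))) := by
  set L := x * Real.log a / (a ^ ((1 : ℝ) / (m : ℝ)) - 1) with hLdef
  have hm0 : (1:ℝ) ≤ (m:ℝ) := by exact_mod_cast hm
  have hmne : (m:ℝ) ≠ 0 := by linarith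
  have hhs := MeasureTheory.hasSum_integral_measure (μ := fun k : ℕ =>
    (ENNReal.ofReal ((m : ℝ) * szPw L k)) •
      (volume.restrict (Set.Ioc ((k : ℝ) / (m : ℝ)) (((k : ℝ) + 1) / (m : ℝ))))) hf
  have hterm : ∀ k : ℕ, (∫ t, f t ∂((ENNReal.ofReal ((m : ℝ) * szPw L k)) •
      (volume.restrict (Set.Ioc ((k : ℝ) / (m : ℝ)) (((k : ℝ) + 1) / (m : ℝ))))))
      = (m : ℝ) * (szPw L k * ∫ t in ((k : ℝ) / (m : ℝ))..(((k : ℝ) + 1) / (m : ℝ)), f t) := by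
    intro k
    rw [integral_smul_measure, ENNReal.toReal_ofReal
      (mul_nonneg (by linarith) (szPw_nonneg hL k))]
    have hle : (k : ℝ) / (m : ℝ) ≤ ((k : ℝ) + 1) / (m : ℝ) :=
      (div_le_div_iff_of_pos_right (by linarith)).mpr (by linarith)
    rw [intervalIntegral.integral_of_le hle, smul_eq_mul]
    ring
  have hhs' : HasSum (fun k : ℕ =>
      (m : ℝ) * (szPw L k * ∫ t in ((k : ℝ) / (m : ℝ))..(((k : ℝ) + 1) / (m : ℝ)), f t))
      (∫ t, f t ∂(szMeas m L)) := by
    have h := hhs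
    simp only [hterm] at h
    exact h
  have h2 : HasSum (fun k : ℕ =>
      szPw L k * ∫ t in ((k : ℝ) / (m : ℝ))..(((k : ℝ) + 1) / (m : ℝ)), f t)
      ((m : ℝ)⁻¹ * ∫ t, f t ∂(szMeas m L)) := by
    have h := hhs'.mul_left (m : ℝ)⁻¹
    simpa [← mul_assoc, inv_mul_cancel₀ hmne] using h
  have htsum : (∑' k : ℕ,
      szPw L k * ∫ t in ((k : ℝ) / (m : ℝ))..(((k : ℝ) + 1) / (m : ℝ)), f t)
      = (m : ℝ)⁻¹ * ∫ t, f t ∂(szMeas m L) := h2.tsum_eq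
  calc szaszKant a m f x
      = (m : ℝ) * ∑' k : ℕ,
        szPw L k * ∫ t in ((k : ℝ) / (m : ℝ))..(((k : ℝ) + 1) / (m : ℝ)), f t := rfl
  _ = (m : ℝ) * ((m : ℝ)⁻¹ * ∫ t, f t ∂(szMeas m L)) := by rw [htsum]
  _ = ∫ t, f t ∂(szMeas m L) := by field_simp

theorem szaszKant_lipschitz_two_param (a : ℝ) (ha : 1 < a) (u v : ℝ)
    (hu : 0 < u) (hv : 0 < v) (α : ℝ) (hα0 : 0 < α) (hα1 : α ≤ 1)
    (M : ℝ) (hM : 0 < M) (g : ℝ → ℝ) (hgc : ContinuousOn g (Set.Ici 0))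
    (hlip : ∀ x y : ℝ, 0 ≤ x → 0 ≤ y →
      |g y - g x| ≤ M * |y - x| ^ α / (y + u * x ^ 2 + v * x) ^ (α / 2))
    (m : ℕ) (hm : 1 ≤ m) (x : ℝ) (hx : 0 < x) :
    |szaszKant a m g x - g x| ≤
      M * (szaszKantCM a m 2 x / (u * x ^ 2 + v * x)) ^ (α / 2) := by
  have hm0 : (1:ℝ) ≤ (m:ℝ) := by exact_mod_cast hm
  set L := x * Real.log a / (a ^ ((1 : ℝ) / (m : ℝ)) - 1) with hLdef
  have hL : 0 < L := by
    have h1 : 0 < Real.log a := Real.log_pos ha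
    have h2 : (1:ℝ) < a ^ ((1 : ℝ) / (m : ℝ)) :=
      (Real.one_lt_rpow_iff_of_pos (by linarith)).mpr
        (Or.inl ⟨ha, by positivity⟩)
    have h3 : 0 < a ^ ((1 : ℝ) / (m : ℝ)) - 1 := by linarith
    rw [hLdef]; positivity
  set μ := szMeas m L with hmudef
  haveI : IsProbabilityMeasure μ := szMeas_prob hm hL
  have hae : ∀ᵐ t ∂μ, t ∈ Set.Ici (0:ℝ) := szMeas_ae_mem m L
  set D := u * x ^ 2 + v * x with hDdef
  have hD : 0 < D := by positivity
  have hDr : 0 < D ^ (α/2) := Real.rpow_pos_of_pos hD _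
  have hc0 : 0 ≤ M / D ^ (α/2) := by positivity
  -- pointwise consequence of the Lipschitz-type condition
  have hkey : ∀ t : ℝ, 0 ≤ t → |g t - g x| ≤ M / D ^ (α/2) * |t - x| ^ α := by
    intro t ht
    have h1 := hlip x t hx.le ht
    have h2 : D ^ (α/2) ≤ (t + u*x^2 + v*x) ^ (α/2) :=
      Real.rpow_le_rpow hD.le (by rw [hDdef]; linarith) (by positivity)
    have h3 : M * |t - x| ^ α / (t + u*x^2 + v*x) ^ (α/2) ≤ M * |t - x| ^ α / D ^ (α/2) := by
      gcongr <;> first | positivity | (rw [hDdef]; linarith)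
    calc |g t - g x| ≤ M * |t - x| ^ α / (t + u*x^2 + v*x) ^ (α/2) := h1
    _ ≤ M * |t - x| ^ α / D ^ (α/2) := h3
    _ = M / D ^ (α/2) * |t - x| ^ α := by ring
  have hsα : ∀ s : ℝ, 0 ≤ s → s ^ α ≤ 1 + s := by
    intro s hs
    rcases le_total s 1 with h | h
    · have := Real.rpow_le_one hs h hα0.le; linarith
    · have h2 : s ^ α ≤ s ^ (1:ℝ) := Real.rpow_le_rpow_of_exponent_le h hα1
      rw [Real.rpow_one] at h2; linarith
  -- measurability and integrability
  have hgm : AEStronglyMeasurable g μ := by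
    have hres : μ.restrict (Set.Ici 0) = μ := Measure.restrict_eq_self_of_ae_mem hae
    have h := hgc.aemeasurable (μ := μ) measurableSet_Ici
    rw [hres] at h
    exact h.aestronglyMeasurable
  have hgint : Integrable g μ := by
    refine szMeas_integrable hm hL hgm
      (A := |g x| + M / D ^ (α/2) * (2 + x)) (B := M / D ^ (α/2))
      (by positivity) hc0 ?_
    intro t ht
    have h1 := hkey t ht.le
    have h2 : |t - x| ^ α ≤ 1 + |t - x| := hsα _ (abs_nonneg _)
    have h3 : |t - x| ≤ t + x := abs_le.mpr ⟨by linarith, by linarith⟩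
    have h4 : t ≤ 1 + t^2 := by nlinarith
    have h5 : |g t| ≤ |g x| + |g t - g x| := by
      have h6 := abs_add_le (g x) (g t - g x)
      have h7 : g x + (g t - g x) = g t := by ring
      rw [h7] at h6
      linarith
    have h8 : M / D ^ (α/2) * |t - x| ^ α ≤ M / D ^ (α/2) * (1 + |t - x|) :=
      mul_le_mul_of_nonneg_left h2 hc0
    have h9 : M / D ^ (α/2) * (1 + |t - x|) ≤ M / D ^ (α/2) * (1 + t + x) := by
      have : (1:ℝ) + |t - x| ≤ 1 + t + x := by linarith
      exact mul_le_mul_of_nonneg_left (by linarith) hc0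
    have h10 : M / D ^ (α/2) * (1 + t + x) ≤ M / D ^ (α/2) * ((2 + x) + t^2) := by
      exact mul_le_mul_of_nonneg_left (by linarith) hc0
    have h11 : M / D ^ (α/2) * ((2 + x) + t^2)
        = M / D ^ (α/2) * (2 + x) + M / D ^ (α/2) * t^2 := by ring
    linarith
  have hsqm : AEStronglyMeasurable (fun t : ℝ => (t - x)^2) μ :=
    (continuous_pow 2 |>.comp (continuous_id.sub continuous_const)).aestronglyMeasurable
  have hsqint : Integrable (fun t : ℝ => (t - x)^2) μ := by
    refine szMeas_integrable hm hL hsqm (A := 2*x^2) (B := 2) (by positivity) (by norm_num) ?_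
    intro t ht
    rw [abs_of_nonneg (sq_nonneg _)]
    nlinarith
  -- identification of operator values as integrals
  have hgeq : szaszKant a m g x = ∫ t, g t ∂μ :=
    szaszKant_eq_integral ha hm hx hL g hgint
  have hΛeq : szaszKantCM a m 2 x = ∫ t, (t - x)^2 ∂μ := by
    rw [szaszKantCM]
    exact szaszKant_eq_integral ha hm hx hL _ hsqint
  have hΛ0 : 0 ≤ ∫ t, (t - x)^2 ∂μ := integral_nonneg fun t => sq_nonneg _
  -- step 1 : reduce to an integral of |g t - g x|
  have hstep1 : |szaszKant a m g x - g x| ≤ ∫ t, |g t - g x| ∂μ := by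
    rw [hgeq]
    have hconst : ∫ _t, g x ∂μ = g x := by
      simp [integral_const, measure_univ]
    have hsub : (∫ t, g t ∂μ) - g x = ∫ t, (g t - g x) ∂μ := by
      rw [integral_sub hgint (integrable_const _), hconst]
    rw [hsub]
    simpa [Real.norm_eq_abs] using
      norm_integral_le_integral_norm (μ := μ) (fun t => g t - g x)
  -- step 2 : pass to a lower integral
  have habs_m : AEStronglyMeasurable (fun t => |g t - g x|) μ := by
    simpa [Real.norm_eq_abs] using (hgm.sub aestronglyMeasurable_const).norm
  have hstep2 : ∫ t, |g t - g x| ∂μ = (∫⁻ t, ENNReal.ofReal |g t - g x| ∂μ).toReal :=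
    integral_eq_lintegral_of_nonneg_ae (Filter.Eventually.of_forall fun t => abs_nonneg _) habs_m
  -- step 3 : pointwise bound inside the lower integral
  set c : ENNReal := ENNReal.ofReal (M / D ^ (α/2)) with hcdef
  have hstep3 : ∫⁻ t, ENNReal.ofReal |g t - g x| ∂μ ≤
      c * ∫⁻ t, (ENNReal.ofReal |t - x|) ^ α ∂μ := by
    calc ∫⁻ t, ENNReal.ofReal |g t - g x| ∂μ
        ≤ ∫⁻ t, c * (ENNReal.ofReal |t - x|) ^ α ∂μ := by
          refine lintegral_mono_ae (hae.mono fun t ht => ?_)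
          have h1 := hkey t ht
          calc ENNReal.ofReal |g t - g x|
              ≤ ENNReal.ofReal (M / D ^ (α/2) * |t - x| ^ α) := ENNReal.ofReal_le_ofReal h1
          _ = c * (ENNReal.ofReal |t - x|) ^ α := by
              rw [ENNReal.ofReal_mul hc0, ENNReal.ofReal_rpow_of_nonneg (abs_nonneg _) hα0.le]
    _ = c * ∫⁻ t, (ENNReal.ofReal |t - x|) ^ α ∂μ :=
        lintegral_const_mul' c _ ENNReal.ofReal_ne_top
  -- step 4 : Hölder inequality
  have hmeas_h : AEMeasurable (fun t : ℝ => (ENNReal.ofReal |t - x|) ^ α) μ := by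
    exact (((continuous_abs.comp
      (continuous_id.sub continuous_const)).measurable.ennreal_ofReal).pow_const α).aemeasurable
  have hconj : Real.HolderConjugate (2/α) (2/(2-α)) := by
    rw [Real.holderConjugate_iff]
    constructor
    · rw [lt_div_iff₀ hα0]; linarith
    · rw [inv_div, inv_div]; field_simp; ring
  have hholder := ENNReal.lintegral_mul_le_Lp_mul_Lq μ hconj
    (f := fun t : ℝ => (ENNReal.ofReal |t - x|) ^ α) (g := 1) hmeas_h aemeasurable_const
  simp only [Pi.mul_apply, Pi.one_apply, mul_one, ENNReal.one_rpow, lintegral_one,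
    measure_univ] at hholder
  have hexp1 : ∀ t : ℝ, ((ENNReal.ofReal |t - x|) ^ α) ^ ((2:ℝ)/α)
      = (ENNReal.ofReal |t - x|) ^ (2:ℝ) := by
    intro t
    rw [← ENNReal.rpow_mul]
    congr 1
    field_simp
  have hholder2 : ∫⁻ t, (ENNReal.ofReal |t - x|) ^ α ∂μ ≤
      (∫⁻ t, (ENNReal.ofReal |t - x|) ^ (2:ℝ) ∂μ) ^ (α/2) := by
    calc ∫⁻ t, (ENNReal.ofReal |t - x|) ^ α ∂μ
        ≤ (∫⁻ t, ((ENNReal.ofReal |t - x|) ^ α) ^ ((2:ℝ)/α) ∂μ) ^ (1/(2/α)) := hholder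
    _ = (∫⁻ t, (ENNReal.ofReal |t - x|) ^ (2:ℝ) ∂μ) ^ (α/2) := by
        rw [one_div_div]
        congr 1
        exact lintegral_congr fun t => hexp1 t
  -- step 5 : identify the second moment
  have hlint2 : ∫⁻ t, (ENNReal.ofReal |t - x|) ^ (2:ℝ) ∂μ
      = ENNReal.ofReal (∫ t, (t - x)^2 ∂μ) := by
    rw [ofReal_integral_eq_lintegral_ofReal hsqint
      (Filter.Eventually.of_forall fun t => sq_nonneg _)]
    refine lintegral_congr fun t => ?_
    rw [ENNReal.ofReal_rpow_of_nonneg (abs_nonneg _) (by norm_num)]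
    congr 1
    rw [show ((2:ℝ)) = ((2:ℕ):ℝ) by norm_num, Real.rpow_natCast, sq_abs]
  -- assemble
  have hfin : (∫⁻ t, ENNReal.ofReal |g t - g x| ∂μ).toReal ≤
      M / D ^ (α/2) * (∫ t, (t - x)^2 ∂μ) ^ (α/2) := by
    refine ENNReal.toReal_le_of_le_ofReal (by positivity) ?_
    calc ∫⁻ t, ENNReal.ofReal |g t - g x| ∂μ
        ≤ c * ∫⁻ t, (ENNReal.ofReal |t - x|) ^ α ∂μ := hstep3
    _ ≤ c * (∫⁻ t, (ENNReal.ofReal |t - x|) ^ (2:ℝ) ∂μ) ^ (α/2) :=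
        mul_le_mul_right hholder2 _
    _ = c * (ENNReal.ofReal (∫ t, (t - x)^2 ∂μ)) ^ (α/2) := by rw [hlint2]
    _ = ENNReal.ofReal (M / D ^ (α/2) * (∫ t, (t - x)^2 ∂μ) ^ (α/2)) := by
        rw [ENNReal.ofReal_rpow_of_nonneg hΛ0 (by positivity),
          ← ENNReal.ofReal_mul hc0]
  have hrhs : M * (szaszKantCM a m 2 x / D) ^ (α/2)
      = M / D ^ (α/2) * (∫ t, (t - x)^2 ∂μ) ^ (α/2) := by
    rw [hΛeq, Real.div_rpow hΛ0 hD.le]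
    ring
  rw [hrhs]
  calc |szaszKant a m g x - g x| ≤ ∫ t, |g t - g x| ∂μ := hstep1
  _ = (∫⁻ t, ENNReal.ofReal |g t - g x| ∂μ).toReal := hstep2
  _ ≤ M / D ^ (α/2) * (∫ t, (t - x)^2 ∂μ) ^ (α/2) := hfin
end
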